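/- arXiv:2603.00323 — 6 statements merged into one kernel-verified Lean document; each statement's English description precedes it below -/
import Mathlib

section
/- Let f : ℂ → ℂ be a non-constant entire function (holomorphic on all of ℂ) that is not a polynomial, i.e. f has an essential singularity at infinity. Then for every subset Y ⊆ ℂ there exists a countable set X ⊆ ℂ with Nagata dimension zero such that f(X) is dense in Y (more precisely, Y is contained in the closure of f(X)). -/
open Set Metric

/-- `S` is `D`-bounded with respect to the distance function `d`:
every two points of `S` are at distance at most `D`. -/
def IsBoundedBy {α : Type*} (d : α → α → ℝ) (S : Set α) (D : ℝ) : Prop :=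
  ∀ x ∈ S, ∀ y ∈ S, d x y ≤ D

/-- The Nagata (Assouad–Nagata) dimension of the set `X ⊆ α` with respect to the
distance function `d`, as an element of `ℕ∞`: the infimum of all `n : ℕ` such that
there is a constant `c > 0` so that for every `s > 0` the set `X` admits a cover by
subsets of diameter at most `c * s` such that every subset of `X` of diameter at
most `s` meets at most `n + 1` members of the cover. -/
noncomputable def nagataDimWith {α : Type*} (d : α → α → ℝ) (X : Set α) : ℕ∞ :=
  sInf {N : ℕ∞ | ∃ n : ℕ, N = (n : ℕ∞) ∧ ∃ c : ℝ, 0 < c ∧ ∀ s : ℝ, 0 < s →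
    ∃ B : Set (Set α), (∀ b ∈ B, b ⊆ X) ∧ X ⊆ ⋃₀ B ∧
      (∀ b ∈ B, IsBoundedBy d b (c * s)) ∧
      ∀ T ⊆ X, IsBoundedBy d T s → {b ∈ B | (T ∩ b).Nonempty}.encard ≤ (n : ℕ∞) + 1}

/-- The Nagata dimension of a subset of a metric space. -/
noncomputable def nagataDim {α : Type*} [PseudoMetricSpace α] (X : Set α) : ℕ∞ :=
  nagataDimWith dist X

open Topology Filter

/-- Generalized Liouville: an entire function with polynomial growth is a polynomial. -/
theorem poly_liouville : ∀ (k : ℕ) (f : ℂ → ℂ), Differentiable ℂ f →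
    ∀ C R : ℝ, (∀ z : ℂ, R ≤ ‖z‖ → ‖f z‖ ≤ C * ‖z‖ ^ k) →
    ∃ p : Polynomial ℂ, ∀ z : ℂ, f z = p.eval z := by
  intro k
  induction k with
  | zero =>
    intro f hf C R hB
    have hbdd : Bornology.IsBounded (range f) := by
      obtain ⟨M, hM⟩ := (isCompact_closedBall (0:ℂ) |R|).exists_bound_of_continuousOn
        hf.continuous.continuousOn
      rw [isBounded_iff_forall_norm_le]
      refine ⟨max M C, ?_⟩
      rintro _ ⟨z, rfl⟩
      rcases le_or_gt R ‖z‖ with h | h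
      · simpa using le_max_of_le_right (by simpa using hB z h)
      · refine le_max_of_le_left (hM z ?_)
        simp only [mem_closedBall, Complex.dist_eq, sub_zero]
        calc ‖z‖ = ‖z‖ := rfl
          _ ≤ R := h.le
          _ ≤ |R| := le_abs_self R
    obtain ⟨c, hc⟩ := hf.exists_const_forall_eq_of_bounded hbdd
    exact ⟨Polynomial.C c, by simp [hc]⟩
  | succ k ih =>
    intro f hf C R hB
    set g := dslope f 0 with hg
    have hgd : Differentiable ℂ g := by
      rw [← differentiableOn_univ] at hf ⊢
      exact (Complex.differentiableOn_dslope (by simp)).mpr hf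
    have hgB : ∀ z : ℂ, max R 1 ≤ ‖z‖ → ‖g z‖ ≤ (|C| + ‖f 0‖) * ‖z‖ ^ k := by
      intro z hz
      have h1 : (1:ℝ) ≤ ‖z‖ := le_trans (le_max_right _ _) hz
      have hz0 : z ≠ 0 := by
        intro h; rw [h] at h1; simp at h1; linarith
      have : g z = (f z - f 0) / z := by
        rw [hg, dslope_of_ne _ hz0, slope_def_field]
        field_simp [hz0]
        ring
      rw [this, norm_div]
      have hzp : (0:ℝ) < ‖z‖ := lt_of_lt_of_le one_pos h1
      have hbz : ‖f z - f 0‖ ≤ |C| * ‖z‖ ^ (k+1) + ‖f 0‖ := by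
        calc ‖f z - f 0‖ ≤ ‖f z‖ + ‖f 0‖ := norm_sub_le _ _
          _ ≤ C * ‖z‖ ^ (k+1) + ‖f 0‖ := by
              have := hB z (le_trans (le_max_left _ _) hz); linarith
          _ ≤ |C| * ‖z‖ ^ (k+1) + ‖f 0‖ := by
              have : C * ‖z‖ ^ (k+1) ≤ |C| * ‖z‖ ^ (k+1) :=
                mul_le_mul_of_nonneg_right (le_abs_self C) (by positivity)
              linarith
      rw [div_le_iff₀ hzp]
      calc ‖f z - f 0‖ ≤ |C| * ‖z‖ ^ (k+1) + ‖f 0‖ := hbz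
        _ ≤ |C| * ‖z‖ ^ (k+1) + ‖f 0‖ * ‖z‖ ^ (k+1) := by
            have : ‖f 0‖ ≤ ‖f 0‖ * ‖z‖ ^ (k+1) := by
              nlinarith [norm_nonneg (f 0), one_le_pow₀ h1 (n := k+1)]
            linarith
        _ = (|C| + ‖f 0‖) * ‖z‖ ^ (k+1) := by ring
        _ = (|C| + ‖f 0‖) * ‖z‖ ^ k * ‖z‖ := by ring
    obtain ⟨p, hp⟩ := ih g hgd (|C| + ‖f 0‖) (max R 1) hgB
    refine ⟨Polynomial.C (f 0) + Polynomial.X * p, fun z => ?_⟩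
    have hz : f z - f 0 = z • g z := by
      simpa using (sub_smul_dslope f 0 z).symm
    simp only [Polynomial.eval_add, Polynomial.eval_C, Polynomial.eval_mul, Polynomial.eval_X]
    rw [← hp]
    have hz' : f z - f 0 = z * g z := by rw [smul_eq_mul] at hz; exact hz
    linear_combination hz'

/-- Casorati–Weierstrass at infinity. -/
theorem casorati_infty (f : ℂ → ℂ) (hf : Differentiable ℂ f)
    (hnp : ¬ ∃ p : Polynomial ℂ, ∀ z : ℂ, f z = p.eval z)
    (R : ℝ) (y : ℂ) (ε : ℝ) (hε : 0 < ε) :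
    ∃ z : ℂ, R < ‖z‖ ∧ ‖f z - y‖ < ε := by
  by_contra hcon
  push_neg at hcon
  -- hcon : ∀ z, R < ‖z‖ → ε ≤ ‖f z - y‖
  set R0 : ℝ := max R 0 + 1 with hR0
  have hR0pos : 0 < R0 := by positivity
  have hRR0 : R < R0 := lt_of_le_of_lt (le_max_left _ _) (by linarith [le_refl (max R 0)])
  set r : ℝ := R0⁻¹ with hr
  have hrpos : 0 < r := inv_pos.mpr hR0pos
  set F : ℂ → ℂ := fun w => (f w⁻¹ - y)⁻¹ with hF
  -- key: for w in punctured ball, f w⁻¹ - y is large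
  have hkey : ∀ w : ℂ, w ∈ ball (0:ℂ) r \ {0} → ε ≤ ‖f w⁻¹ - y‖ := by
    rintro w ⟨hw1, hw2⟩
    simp only [mem_ball, Complex.dist_eq, sub_zero] at hw1
    have hw0 : w ≠ 0 := hw2
    have hwn : (0:ℝ) < ‖w‖ := norm_pos_iff.mpr hw0
    have : R0 < ‖w⁻¹‖ := by
      rw [norm_inv]
      rw [← inv_inv R0]
      exact inv_strictAnti₀ hwn hw1
    exact hcon _ (lt_trans hRR0 this)
  have hne : ∀ w : ℂ, w ∈ ball (0:ℂ) r \ {0} → f w⁻¹ - y ≠ 0 := by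
    intro w hw h0
    have := hkey w hw
    rw [h0] at this; simp at this; linarith
  have hFd : DifferentiableOn ℂ F (ball (0:ℂ) r \ {0}) := by
    intro w hw
    have hw0 : w ≠ 0 := hw.2
    have h1 : DifferentiableAt ℂ (fun w : ℂ => f w⁻¹ - y) w :=
      ((hf.differentiableAt).comp w (differentiableAt_inv hw0)).sub_const y
    exact ((h1.inv (hne w hw)).differentiableWithinAt)
  have hFb : BddAbove (norm ∘ F '' (ball (0:ℂ) r \ {0})) := by
    refine ⟨ε⁻¹, ?_⟩
    rintro _ ⟨w, hw, rfl⟩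
    simp only [Function.comp_apply, hF, norm_inv]
    exact inv_anti₀ hε (hkey w hw)
  set G := Function.update F 0 (limUnder (𝓝[≠] (0:ℂ)) F) with hG
  have hGd : DifferentiableOn ℂ G (ball (0:ℂ) r) :=
    Complex.differentiableOn_update_limUnder_of_bddAbove (ball_mem_nhds _ hrpos) hFd hFb
  have hGa : AnalyticAt ℂ G 0 :=
    (hGd.analyticAt (isOpen_ball.mem_nhds (by simp [mem_ball, hrpos])))
  -- G is not eventually zero near 0
  have hGne : ¬ ∀ᶠ w in 𝓝 (0:ℂ), G w = 0 := by
    intro h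
    have h2 : ∀ᶠ w in 𝓝[≠] (0:ℂ), G w = 0 := h.filter_mono nhdsWithin_le_nhds
    have h3 : ∀ᶠ w in 𝓝[≠] (0:ℂ), w ∈ ball (0:ℂ) r \ {0} := by
      filter_upwards [self_mem_nhdsWithin,
        eventually_nhdsWithin_of_eventually_nhds (ball_mem_nhds (0:ℂ) hrpos)] with w h1 h2
      exact ⟨h2, h1⟩
    have h4 : ∀ᶠ w in 𝓝[≠] (0:ℂ), False := by
      filter_upwards [h2, h3] with w hw1 hw2
      have hw0 : w ≠ 0 := hw2.2
      have : G w = F w := Function.update_of_ne hw0 _ _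
      rw [this] at hw1
      exact (hne w hw2) (by simpa [hF, inv_eq_zero] using hw1)
    rcases h4.exists with ⟨-, h⟩; exact h
  obtain ⟨n, u, hu, hu0, huev⟩ := hGa.exists_eventuallyEq_pow_smul_nonzero_iff.mpr hGne
  -- near 0, ‖u w‖ ≥ ‖u 0‖ / 2
  have hupos : 0 < ‖u 0‖ := norm_pos_iff.mpr hu0
  have huev2 : ∀ᶠ w in 𝓝 (0:ℂ), ‖u 0‖ / 2 ≤ ‖u w‖ := by
    have hc : ContinuousAt (fun w => ‖u w‖) 0 := hu.continuousAt.norm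
    exact hc.eventually (eventually_ge_nhds (by linarith))
  -- extract a δ-ball where everything holds
  have hball : ∀ᶠ w in 𝓝 (0:ℂ), w ∈ ball (0:ℂ) r := ball_mem_nhds _ hrpos
  obtain ⟨δ, hδpos, hδ⟩ := Metric.eventually_nhds_iff.mp (huev.and (huev2.and hball))
  set C : ℝ := 2 / ‖u 0‖ + ‖y‖ with hC
  set R1 : ℝ := max (2/δ) 1 with hR1
  have hgrow : ∀ z : ℂ, R1 ≤ ‖z‖ → ‖f z‖ ≤ C * ‖z‖ ^ n := by
    intro z hz
    have h1 : (1:ℝ) ≤ ‖z‖ := le_trans (le_max_right _ _) hz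
    have hzpos : (0:ℝ) < ‖z‖ := lt_of_lt_of_le one_pos h1
    have hz0 : z ≠ 0 := norm_pos_iff.mp hzpos
    set w : ℂ := z⁻¹ with hw
    have hw0 : w ≠ 0 := inv_ne_zero hz0
    have hwn : ‖w‖ = ‖z‖⁻¹ := norm_inv z
    have hwδ : dist w 0 < δ := by
      rw [dist_zero_right, hwn]
      have h2 : 2/δ ≤ ‖z‖ := le_trans (le_max_left _ _) hz
      have : ‖z‖⁻¹ ≤ δ/2 := by
        rw [inv_le_comm₀ hzpos (by positivity)]
        calc (δ/2)⁻¹ = 2/δ := by field_simp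
          _ ≤ ‖z‖ := h2
      linarith
    obtain ⟨hGw, huw, hbw⟩ := hδ hwδ
    have hwmem : w ∈ ball (0:ℂ) r \ {0} := ⟨hbw, hw0⟩
    have hinv : w⁻¹ = z := inv_inv z
    have hfz : f z - y ≠ 0 := by
      have := hne w hwmem; rwa [hinv] at this
    have hGF : G w = F w := Function.update_of_ne hw0 _ _
    have heq : (f z - y)⁻¹ = w ^ n * u w := by
      rw [← hinv]
      calc (f w⁻¹ - y)⁻¹ = F w := rfl
        _ = G w := hGF.symm
        _ = (w - 0) ^ n • u w := hGw
        _ = w ^ n * u w := by rw [sub_zero, smul_eq_mul]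
    have hnorm : ‖f z - y‖⁻¹ = ‖w‖ ^ n * ‖u w‖ := by
      rw [← norm_inv, heq, norm_mul, norm_pow]
    have hfzpos : (0:ℝ) < ‖f z - y‖ := norm_pos_iff.mpr hfz
    have hupos2 : (0:ℝ) < ‖u w‖ := lt_of_lt_of_le (by linarith) huw
    have hwnpos : (0:ℝ) < ‖w‖ := norm_pos_iff.mpr hw0
    have hbound : ‖f z - y‖ ≤ 2 / ‖u 0‖ * ‖z‖ ^ n := by
      have h3 : ‖f z - y‖ = (‖w‖ ^ n * ‖u w‖)⁻¹ := by
        rw [← hnorm, inv_inv]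
      have h4 : (‖u w‖)⁻¹ ≤ 2/‖u 0‖ := by
        rw [inv_le_comm₀ hupos2 (by positivity)]
        calc (2/‖u 0‖)⁻¹ = ‖u 0‖/2 := by field_simp
          _ ≤ ‖u w‖ := huw
      rw [h3, mul_inv, hwn, inv_pow, inv_inv]
      calc ‖z‖ ^ n * ‖u w‖⁻¹ ≤ ‖z‖ ^ n * (2/‖u 0‖) :=
            mul_le_mul_of_nonneg_left h4 (by positivity)
        _ = 2 / ‖u 0‖ * ‖z‖ ^ n := by ring
    calc ‖f z‖ ≤ ‖f z - y‖ + ‖y‖ := by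
          have h5 := norm_add_le (f z - y) y
          simpa using h5
      _ ≤ 2 / ‖u 0‖ * ‖z‖ ^ n + ‖y‖ := by linarith
      _ ≤ 2 / ‖u 0‖ * ‖z‖ ^ n + ‖y‖ * ‖z‖ ^ n := by
          nlinarith [one_le_pow₀ h1 (n := n), norm_nonneg y]
      _ = C * ‖z‖ ^ n := by rw [hC]; ring
  exact hnp (poly_liouville n f hf C R1 hgrow)

/-- A sequence with rapidly growing norms has Nagata dimension 0. -/
theorem nagataDim_range_zero (x : ℕ → ℂ) (hx : ∀ k, 2 * ‖x k‖ + 1 ≤ ‖x (k+1)‖) :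
    nagataDim (range x) = 0 := by
  -- norms are monotone
  have hmono : Monotone (fun k => ‖x k‖) := by
    apply monotone_nat_of_le_succ
    intro k
    have := hx k
    have := norm_nonneg (x k)
    show ‖x k‖ ≤ ‖x (k+1)‖
    linarith
  have hgap : ∀ j k : ℕ, j < k → 2 * ‖x j‖ + 1 ≤ ‖x k‖ := by
    intro j k hjk
    calc 2 * ‖x j‖ + 1 ≤ ‖x (j+1)‖ := hx j
      _ ≤ ‖x k‖ := hmono hjk
  -- separation: two distinct points, one of norm > 2s, are at distance > s
  have hsep : ∀ s : ℝ, 0 ≤ s → ∀ j k : ℕ, x j ≠ x k → 2 * s < ‖x k‖ →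
      s < dist (x j) (x k) := by
    intro s hs j k hne h2s
    have hjk : j ≠ k := fun h => hne (by rw [h])
    rcases lt_or_gt_of_ne hjk with h | h
    · -- j < k : ‖x k‖ ≥ 2‖x j‖ + 1
      have hg := hgap j k h
      have hd : ‖x k‖ - ‖x j‖ ≤ dist (x j) (x k) := by
        rw [dist_eq_norm]
        have := norm_sub_norm_le (x k) (x j)
        have h2 : ‖x j - x k‖ = ‖x k - x j‖ := norm_sub_rev _ _
        linarith
      rcases le_or_gt ‖x j‖ s with hc | hc
      · linarith
      · linarith
    · -- k < j : ‖x j‖ ≥ 2‖x k‖ + 1 ≥ ‖x k‖ + 1 > 2s ... need ‖x j‖ - ‖x k‖ > s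
      have hg := hgap k j h
      have hd : ‖x j‖ - ‖x k‖ ≤ dist (x j) (x k) := by
        rw [dist_eq_norm]
        have := norm_sub_norm_le (x j) (x k)
        linarith
      rcases le_or_gt ‖x k‖ s with hc | hc
      · -- ‖x j‖ ≥ 2‖x k‖+1, and ‖x j‖ ≥ ‖x k‖... need > s + ‖x k‖.
        linarith
      · linarith
  rw [nagataDim, nagataDimWith]
  refine le_antisymm (sInf_le ?_) zero_le
  · refine ⟨0, rfl, 4, by norm_num, ?_⟩
    intro s hs
    set A : Set ℂ := {z ∈ range x | ‖z‖ ≤ 2*s} with hA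
    set B : Set (Set ℂ) := insert A ((fun z => ({z} : Set ℂ)) '' {z ∈ range x | 2*s < ‖z‖}) with hB
    have hBmem : ∀ b ∈ B, b = A ∨ ∃ z ∈ range x, 2*s < ‖z‖ ∧ b = {z} := by
      intro b hb
      rcases hb with hb | ⟨z, hz, rfl⟩
      · exact Or.inl hb
      · exact Or.inr ⟨z, hz.1, hz.2, rfl⟩
    refine ⟨B, ?_, ?_, ?_, ?_⟩
    · intro b hb
      rcases hBmem b hb with rfl | ⟨z, hz, -, rfl⟩
      · exact fun z hz => hz.1
      · simpa using hz
    · rintro _ ⟨k, rfl⟩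
      rcases le_or_gt ‖x k‖ (2*s) with h | h
      · exact ⟨A, mem_insert _ _, ⟨⟨k, rfl⟩, h⟩⟩
      · exact ⟨{x k}, mem_insert_of_mem _ ⟨x k, ⟨⟨k, rfl⟩, h⟩, rfl⟩, rfl⟩
    · intro b hb
      rcases hBmem b hb with rfl | ⟨z, hz, h2, rfl⟩
      · intro a ha b hb
        rw [dist_eq_norm]
        calc ‖a - b‖ ≤ ‖a‖ + ‖b‖ := norm_sub_le _ _
          _ ≤ 4 * s := by have := ha.2; have := hb.2; linarith
      · intro a ha b hb
        simp only [mem_singleton_iff] at ha hb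
        rw [ha, hb, dist_self]
        linarith
    · intro T hT hTb
      rw [show ((0:ℕ) : ℕ∞) + 1 = 1 by norm_num, Set.encard_le_one_iff]
      rintro b1 b2 ⟨hb1, t1, ht1, ht1'⟩ ⟨hb2, t2, ht2, ht2'⟩
      by_contra hne12
      -- t1 t2 ∈ range x, dist t1 t2 ≤ s
      obtain ⟨j, hj⟩ := hT ht1
      obtain ⟨k, hk⟩ := hT ht2
      have hdist : dist t1 t2 ≤ s := hTb t1 ht1 t2 ht2
      have main : ∀ (a b : ℂ), a ∈ range x → b ∈ range x → a ≠ b → 2*s < ‖b‖ →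
          s < dist a b := by
        rintro _ _ ⟨j, rfl⟩ ⟨k, rfl⟩ hne h2
        exact hsep s hs.le j k hne h2
      -- case analysis
      rcases hBmem b1 hb1 with rfl | ⟨z1, hz1, h21, rfl⟩
      · rcases hBmem b2 hb2 with h | ⟨z2, hz2, h22, rfl⟩
        · exact absurd h.symm hne12
        · -- t1 ∈ A, t2 = z2 with ‖z2‖ > 2s
          simp only [mem_singleton_iff] at ht2'
          subst ht2'
          have hne : t1 ≠ t2 := by
            intro h; rw [h] at ht1'; exact absurd ht1'.2 (not_le.mpr h22)
          have := main t1 t2 (hT ht1) (hT ht2) hne h22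
          linarith
      · rcases hBmem b2 hb2 with rfl | ⟨z2, hz2, h22, rfl⟩
        · simp only [mem_singleton_iff] at ht1'
          subst ht1'
          have hne : t2 ≠ t1 := by
            intro h; rw [h] at ht2'; exact absurd ht2'.2 (not_le.mpr h21)
          have := main t2 t1 (hT ht2) (hT ht1) hne h21
          rw [dist_comm] at this
          linarith
        · simp only [mem_singleton_iff] at ht1' ht2'
          subst ht1'; subst ht2'
          have hne : t1 ≠ t2 := by
            intro h; exact hne12 (by rw [h])
          have := main t1 t2 (hT ht1) (hT ht2) hne h22
          linarith


/-- For an entire function with an essential singularity at infinity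
(i.e. not a polynomial) and any `Y ⊆ ℂ`, there is a countable set `X` of Nagata
dimension zero with `f(X)` dense in `Y`. -/
theorem entire_increase_nagataDim (f : ℂ → ℂ) (hf : Differentiable ℂ f)
    (hnp : ¬ ∃ p : Polynomial ℂ, ∀ z : ℂ, f z = p.eval z) (Y : Set ℂ) :
    ∃ X : Set ℂ, X.Countable ∧ nagataDim X = 0 ∧ Y ⊆ closure (f '' X) := by

  -- countable dense subset of Y
  obtain ⟨D, hDc, hYD⟩ := TopologicalSpace.IsSeparable.of_separableSpace Y
  set D' : Set ℂ := insert 0 D with hD'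
  have hD'c : D'.Countable := hDc.insert 0
  have hD'ne : D'.Nonempty := ⟨0, mem_insert _ _⟩
  obtain ⟨u, hu⟩ := hD'c.exists_eq_range hD'ne
  -- target at step k
  set y : ℕ → ℂ := fun k => u (Nat.unpair k).1 with hy
  set e : ℕ → ℝ := fun k => 1 / ((Nat.unpair k).2 + 1) with he
  have hepos : ∀ k, 0 < e k := fun k => by positivity
  have key : ∀ (R : ℝ) (k : ℕ), ∃ z : ℂ, R < ‖z‖ ∧ ‖f z - y k‖ < e k :=
    fun R k => casorati_infty f hf hnp R (y k) (e k) (hepos k)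
  choose F hF1 hF2 using key
  -- recursive sequence
  set x : ℕ → ℂ := fun k => Nat.rec (F 0 0) (fun k ih => F (2 * ‖ih‖ + 1) (k+1)) k with hxdef
  have hx0 : x 0 = F 0 0 := rfl
  have hxs : ∀ k, x (k+1) = F (2 * ‖x k‖ + 1) (k+1) := fun k => rfl
  have hgrow : ∀ k, 2 * ‖x k‖ + 1 ≤ ‖x (k+1)‖ := by
    intro k
    rw [hxs k]
    exact (hF1 (2 * ‖x k‖ + 1) (k+1)).le
  have happrox : ∀ k, ‖f (x k) - y k‖ < e k := by
    intro k
    cases k with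
    | zero => rw [hx0]; exact hF2 0 0
    | succ k => rw [hxs k]; exact hF2 _ (k+1)
  refine ⟨range x, countable_range x, nagataDim_range_zero x hgrow, ?_⟩
  -- density
  have hD'sub : D' ⊆ closure (f '' range x) := by
    intro d hd
    rw [hu] at hd
    obtain ⟨m, rfl⟩ := hd
    rw [Metric.mem_closure_iff]
    intro ε hε
    obtain ⟨n, hn⟩ := exists_nat_one_div_lt hε
    set k := Nat.pair m n with hk
    refine ⟨f (x k), mem_image_of_mem f (mem_range_self k), ?_⟩
    have h1 : y k = u m := by rw [hy]; simp [hk, Nat.unpair_pair]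
    have h2 : e k = 1 / (n + 1) := by rw [he]; simp [hk, Nat.unpair_pair]
    have := happrox k
    rw [h1, h2] at this
    rw [dist_comm, dist_eq_norm]
    calc ‖f (x k) - u m‖ < 1 / (n + 1) := this
      _ < ε := by exact_mod_cast hn
  calc Y ⊆ closure D := hYD
    _ ⊆ closure D' := closure_mono (subset_insert _ _)
    _ ⊆ closure (closure (f '' range x)) := closure_mono hD'sub
    _ = closure (f '' range x) := closure_closure
end

section
/- Let X ⊆ ℝ with the Euclidean metric. Suppose there exist δ > 0, real numbers a_n, and natural numbers M_n with M_n → ∞ such that the finite arithmetic progression {a_n, a_n + δ, a_n + 2δ, …, a_n + M_n·δ} is contained in X for every n. Then dim_N X = 1. -/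
open Set Metric

/-- If `X ⊆ ℝ` contains, for some fixed `δ > 0`, arithmetic progressions
`{a_n, a_n + δ, …, a_n + M_n δ}` with `M_n → ∞`, then `dim_N X = 1`. -/
theorem growing_arithmetic_patches (X : Set ℝ) (δ : ℝ) (hδ : 0 < δ)
    (a : ℕ → ℝ) (M : ℕ → ℕ)
    (hM : Filter.Tendsto M Filter.atTop Filter.atTop)
    (hmem : ∀ n : ℕ, ∀ k : ℕ, k ≤ M n → a n + k * δ ∈ X) :
    nagataDim X = 1 := by
  classical
  set S := {N : ℕ∞ | ∃ n : ℕ, N = (n : ℕ∞) ∧ ∃ c : ℝ, 0 < c ∧ ∀ s : ℝ, 0 < s →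
    ∃ B : Set (Set ℝ), (∀ b ∈ B, b ⊆ X) ∧ X ⊆ ⋃₀ B ∧
      (∀ b ∈ B, IsBoundedBy dist b (c * s)) ∧
      ∀ T ⊆ X, IsBoundedBy dist T s → {b ∈ B | (T ∩ b).Nonempty}.encard ≤ (n : ℕ∞) + 1}
    with hSdef
  -- Upper bound: 1 ∈ S
  have hone : (1 : ℕ∞) ∈ S := by
    refine ⟨1, rfl, 2, by norm_num, fun s hs => ?_⟩
    set L := 2 * s with hL
    have hL0 : 0 < L := by positivity
    set f : ℤ → Set ℝ := fun k => X ∩ Ico ((k : ℝ) * L) ((k : ℝ) * L + L) with hf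
    refine ⟨Set.range f, ?_, ?_, ?_, ?_⟩
    · rintro b ⟨k, rfl⟩; exact inter_subset_left
    · intro x hx
      refine ⟨f ⌊x / L⌋, ⟨⌊x / L⌋, rfl⟩, hx, ?_, ?_⟩
      · have := Int.sub_floor_div_mul_nonneg x hL0; linarith
      · have := Int.sub_floor_div_mul_lt x hL0; linarith
    · rintro b ⟨k, rfl⟩ x hx y hy
      obtain ⟨-, hx1, hx2⟩ := hx
      obtain ⟨-, hy1, hy2⟩ := hy
      rw [Real.dist_eq, abs_le]
      constructor <;> linarith
    · intro T hT hTb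
      rcases T.eq_empty_or_nonempty with rfl | ⟨t, ht⟩
      · simp
      have key : {b ∈ Set.range f | (T ∩ b).Nonempty} ⊆
          {f ⌊(t - s) / L⌋, f (⌊(t - s) / L⌋ + 1)} := by
        rintro b ⟨⟨k, rfl⟩, y, hyT, -, hy1, hy2⟩
        have hdist : |y - t| ≤ s := by
          have := hTb y hyT t ht
          rwa [Real.dist_eq] at this
        rw [abs_le] at hdist
        have hk : k = ⌊y / L⌋ := by
          symm
          rw [Int.floor_eq_iff]
          constructor
          · rw [le_div_iff₀ hL0]; linarith
          · rw [div_lt_iff₀ hL0]; linarith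
        have h1 : ⌊(t - s) / L⌋ ≤ k := by
          rw [hk]; exact Int.floor_le_floor (by apply div_le_div_of_nonneg_right ?_ hL0.le; linarith)
        have h2 : k ≤ ⌊(t - s) / L⌋ + 1 := by
          rw [hk]
          have heq : (t + s) / L = (t - s) / L + 1 := by
            field_simp; ring
          have : ⌊y / L⌋ ≤ ⌊(t + s) / L⌋ :=
            Int.floor_le_floor (by apply div_le_div_of_nonneg_right ?_ hL0.le; linarith)
          rwa [heq, Int.floor_add_one] at this
        have hk2 : k = ⌊(t - s) / L⌋ ∨ k = ⌊(t - s) / L⌋ + 1 := by omega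
        rcases hk2 with rfl | rfl
        · exact Or.inl rfl
        · exact Or.inr rfl
      calc {b ∈ Set.range f | (T ∩ b).Nonempty}.encard
          ≤ ({f ⌊(t - s) / L⌋, f (⌊(t - s) / L⌋ + 1)} : Set (Set ℝ)).encard :=
            Set.encard_mono key
        _ ≤ 1 + 1 := by
            refine (Set.encard_insert_le _ _).trans ?_
            simp
        _ ≤ (1 : ℕ∞) + 1 := le_refl _
  -- Lower bound: every element of S is ≥ 1
  have hlow : ∀ N ∈ S, (1 : ℕ∞) ≤ N := by
    rintro N ⟨n, rfl, c, hc, hcov⟩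
    by_contra hcon
    have hn0 : n = 0 := by
      by_contra h
      exact hcon (by exact_mod_cast Nat.one_le_iff_ne_zero.mpr h)
    subst hn0
    obtain ⟨B, hBX, hBcov, hBbd, hBmul⟩ := hcov δ hδ
    obtain ⟨n₀, hn₀⟩ := (hM.eventually_ge_atTop (⌈c⌉₊ + 1)).exists
    set m := M n₀ with hm
    set x : ℕ → ℝ := fun k => a n₀ + k * δ with hx
    have hxX : ∀ k ≤ m, x k ∈ X := fun k hk => hmem n₀ k hk
    have chain : ∀ k ≤ m, ∃ b ∈ B, x 0 ∈ b ∧ x k ∈ b := by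
      intro k
      induction k with
      | zero =>
        intro _
        obtain ⟨b, hbB, hxb⟩ := hBcov (hxX 0 (Nat.zero_le _))
        exact ⟨b, hbB, hxb, hxb⟩
      | succ k ih =>
        intro hk1
        obtain ⟨b, hbB, hb0, hbk⟩ := ih (Nat.le_of_succ_le hk1)
        obtain ⟨b', hb'B, hxb'⟩ := hBcov (hxX (k + 1) hk1)
        have hTsub : ({x k, x (k + 1)} : Set ℝ) ⊆ X := by
          rintro u (rfl | rfl)
          · exact hxX k (Nat.le_of_succ_le hk1)
          · exact hxX (k + 1) hk1
        have hTbd : IsBoundedBy dist ({x k, x (k + 1)} : Set ℝ) δ := by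
          have hd : dist (x k) (x (k + 1)) = δ := by
            rw [Real.dist_eq, hx]
            push_cast
            rw [abs_of_nonpos (by linarith)]
            ring
          rintro u (rfl | rfl) v (rfl | rfl)
          · simp [hδ.le]
          · rw [hd]
          · rw [dist_comm, hd]
          · simp [hδ.le]
        have hmul := hBmul _ hTsub hTbd
        have hb_mem : b ∈ {b ∈ B | (({x k, x (k + 1)} : Set ℝ) ∩ b).Nonempty} :=
          ⟨hbB, x k, Or.inl rfl, hbk⟩
        have hb'_mem : b' ∈ {b ∈ B | (({x k, x (k + 1)} : Set ℝ) ∩ b).Nonempty} :=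
          ⟨hb'B, x (k + 1), Or.inr rfl, hxb'⟩
        have hone' : {b ∈ B | (({x k, x (k + 1)} : Set ℝ) ∩ b).Nonempty}.encard ≤ 1 := by
          simpa using hmul
        have : b = b' := by
          rw [Set.encard_le_one_iff] at hone'
          exact hone' _ _ hb_mem hb'_mem
        exact ⟨b', hb'B, this ▸ hb0, hxb'⟩
    obtain ⟨b, hbB, hb0, hbm⟩ := chain m le_rfl
    have hbd := hBbd b hbB (x 0) hb0 (x m) hbm
    have hd : dist (x 0) (x m) = m * δ := by
      have hsub : x 0 - x m = -((m : ℝ) * δ) := by rw [hx]; push_cast; ring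
      rw [Real.dist_eq, hsub, abs_neg, abs_of_nonneg (by positivity)]
    rw [hd] at hbd
    have hmc : (m : ℝ) ≤ c := (mul_le_mul_iff_of_pos_right hδ).mp hbd
    have hcm : c < (m : ℝ) := by
      calc c ≤ (⌈c⌉₊ : ℝ) := Nat.le_ceil c
        _ < (⌈c⌉₊ : ℝ) + 1 := by linarith
        _ ≤ (m : ℝ) := by exact_mod_cast hn₀
    linarith
  have : nagataDim X = sInf S := rfl
  rw [this]
  exact le_antisymm (sInf_le hone) (le_sInf hlow)
end

section
/- Let (X,d) be a metric space, let o ∈ X be a basepoint, let λ > 1, and let (x_k)_{k ∈ ℕ} be a sequence of points of X with d(x_0, o) > 0 and d(x_{k+1}, o) ≥ λ · d(x_k, o) for all k ∈ ℕ. Then the set Z = {x_k : k ∈ ℕ}, with the metric induced from X, has Nagata dimension zero. -/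
open Set Metric

/-- If the distances of a sequence `(x k)` to a basepoint `o` grow at
least geometrically (with ratio `λ > 1`, starting from a positive distance), then the set
`Z = {x k : k ∈ ℕ}` has Nagata dimension zero. -/
theorem geometric_sequence_nagataDim_zero {X : Type*} [MetricSpace X] (o : X)
    (lam : ℝ) (hlam : 1 < lam) (x : ℕ → X) (h0 : 0 < dist (x 0) o)
    (hgrow : ∀ k : ℕ, lam * dist (x k) o ≤ dist (x (k + 1)) o) :
    nagataDim (Set.range x) = 0 := by
  have hlam1 : (0:ℝ) < lam - 1 := by linarith
  set d : ℕ → ℝ := fun k => dist (x k) o with hd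
  have dpos : ∀ k, 0 < d k := by
    intro k
    induction k with
    | zero => exact h0
    | succ n ih =>
      have : 0 < lam * d n := by positivity
      exact lt_of_lt_of_le this (hgrow n)
  have dmono : Monotone d := by
    apply monotone_nat_of_le_succ
    intro n
    have h1 : d n ≤ lam * d n := le_mul_of_one_le_left (dpos n).le hlam.le
    exact h1.trans (hgrow n)
  have dstrict : StrictMono d := by
    apply strictMono_nat_of_lt_succ
    intro n
    have : d n < lam * d n := by nlinarith [dpos n]
    exact lt_of_lt_of_le this (hgrow n)
  have dlt : ∀ j k, j < k → lam * d j ≤ d k := by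
    intro j k hjk
    exact (hgrow j).trans (dmono hjk)
  have xinj : Function.Injective x := by
    intro a b hab
    exact dstrict.injective (by simp only [hd]; rw [hab])
  have hmem : (0 : ℕ∞) ∈ {N : ℕ∞ | ∃ n : ℕ, N = (n : ℕ∞) ∧ ∃ c : ℝ, 0 < c ∧ ∀ s : ℝ, 0 < s →
      ∃ B : Set (Set X), (∀ b ∈ B, b ⊆ Set.range x) ∧ Set.range x ⊆ ⋃₀ B ∧
        (∀ b ∈ B, IsBoundedBy dist b (c * s)) ∧
        ∀ T ⊆ Set.range x, IsBoundedBy dist T s →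
          {b ∈ B | (T ∩ b).Nonempty}.encard ≤ (n : ℕ∞) + 1} := by
    refine ⟨0, by simp, 2 * lam / (lam - 1), by positivity, ?_⟩
    intro s hs
    set M : ℝ := lam * s / (lam - 1) with hM
    have hMpos : 0 < M := by positivity
    have key : ∀ j k : ℕ, lam * d j ≤ d k → M < d k → s < dist (x j) (x k) := by
      intro j k h1 h2
      have h3 : d k - d j ≤ dist (x j) (x k) := by
        have ht := dist_triangle (x k) (x j) o
        rw [dist_comm (x k) (x j)] at ht
        simp only [hd] at *
        linarith
      have hdj := dpos j
      have hdk := dpos k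
      have hMk : lam * s < (lam - 1) * d k := by
        have := (div_lt_iff₀ hlam1).mp (show lam * s / (lam - 1) < d k from h2)
        linarith
      nlinarith
    set C : Set X := x '' {j | d j ≤ M} with hC
    refine ⟨insert C ((fun k => ({x k} : Set X)) '' {k | M < d k}), ?_, ?_, ?_, ?_⟩
    · intro b hb
      rcases Set.mem_insert_iff.mp hb with rfl | ⟨k, _, rfl⟩
      · exact (Set.image_subset_range x _)
      · simp
    · rintro p ⟨k, rfl⟩
      by_cases h : d k ≤ M
      · exact ⟨C, Set.mem_insert _ _, ⟨k, h, rfl⟩⟩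
      · exact ⟨{x k}, Set.mem_insert_of_mem _ ⟨k, lt_of_not_ge h, rfl⟩, rfl⟩
    · intro b hb
      have hcs : 2 * lam / (lam - 1) * s = 2 * M := by
        rw [hM]; ring
      rcases Set.mem_insert_iff.mp hb with rfl | ⟨k, _, rfl⟩
      · rintro p ⟨j, hj, rfl⟩ q ⟨l, hl, rfl⟩
        have h1 : dist (x j) (x l) ≤ d j + d l := by
          have ht := dist_triangle (x j) o (x l)
          rw [dist_comm o (x l)] at ht
          simpa [hd] using ht
        rw [hcs]
        simp only [Set.mem_setOf_eq] at hj hl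
        linarith
      · rintro p hp q hq
        rw [Set.mem_singleton_iff] at hp hq
        subst hp; subst hq
        rw [dist_self, hcs]
        positivity
    · intro T hT hTbound
      have h01 : ((0 : ℕ) : ℕ∞) + 1 = 1 := by simp
      rw [h01, Set.encard_le_one_iff]
      rintro b1 b2 hb1 hb2
      obtain ⟨hb1m, p, hpT, hpb⟩ := hb1
      obtain ⟨hb2m, q, hqT, hqb⟩ := hb2
      have hpq : dist p q ≤ s := hTbound p hpT q hqT
      have hqp : dist q p ≤ s := hTbound q hqT p hpT
      -- helper for mixed case
      rcases Set.mem_insert_iff.mp hb1m with rfl | ⟨k1, hk1, rfl⟩ <;>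
        rcases Set.mem_insert_iff.mp hb2m with h2 | ⟨k2, hk2, rfl⟩
      · rw [h2]
      · -- b1 = C, b2 = {x k2}, M < d k2
        exfalso
        simp only [Set.mem_setOf_eq] at hk2
        obtain ⟨j, hj, rfl⟩ := hpb
        rw [Set.mem_singleton_iff] at hqb
        subst hqb
        simp only [Set.mem_setOf_eq] at hj
        have hjk : j < k2 := by
          by_contra hcon
          exact absurd (dmono (not_lt.mp hcon)) (not_le.mpr (lt_of_le_of_lt hj hk2))
        exact absurd hpq (not_le.mpr (key j k2 (dlt j k2 hjk) hk2))
      · -- b1 = {x k1}, b2 = C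
        exfalso
        subst h2
        simp only [Set.mem_setOf_eq] at hk1
        obtain ⟨j, hj, rfl⟩ := hqb
        rw [Set.mem_singleton_iff] at hpb
        subst hpb
        simp only [Set.mem_setOf_eq] at hj
        have hjk : j < k1 := by
          by_contra hcon
          exact absurd (dmono (not_lt.mp hcon)) (not_le.mpr (lt_of_le_of_lt hj hk1))
        exact absurd hqp (not_le.mpr (key j k1 (dlt j k1 hjk) hk1))
      · -- both singletons
        rw [Set.mem_singleton_iff] at hpb hqb
        subst hpb; subst hqb
        simp only [Set.mem_setOf_eq] at hk1 hk2
        rcases lt_trichotomy k1 k2 with h | h | h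
        · exact absurd hpq (not_le.mpr (key k1 k2 (dlt k1 k2 h) hk2))
        · rw [h]
        · exact absurd hqp (not_le.mpr (key k2 k1 (dlt k2 k1 h) hk1))
  refine le_antisymm ?_ zero_le
  exact sInf_le hmem
end

section
/- Let (X,d) be a metric space. Then dim_N X = 0 if and only if there exists a constant C ≥ 1 such that for every s > 0, every s-chain component of X has diameter at most C·s. -/
open Set Metric

/-- Two points of a metric space are `s`-chain connected if they are joined by a finite
chain of points with consecutive distances at most `s`. -/
def ChainConnected {X : Type*} [PseudoMetricSpace X] (s : ℝ) (x y : X) : Prop :=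
  ∃ (N : ℕ) (c : ℕ → X), c 0 = x ∧ c N = y ∧ ∀ i < N, dist (c i) (c (i + 1)) ≤ s

theorem cc_refl {X : Type*} [PseudoMetricSpace X] (s : ℝ) (x : X) :
    ChainConnected s x x := ⟨0, fun _ => x, rfl, rfl, fun i hi => by omega⟩

theorem cc_symm {X : Type*} [PseudoMetricSpace X] {s : ℝ} {x y : X}
    (h : ChainConnected s x y) : ChainConnected s y x := by
  obtain ⟨N, c, h0, hN, hs⟩ := h
  refine ⟨N, fun i => c (N - i), by simpa, by simpa, fun i hi => ?_⟩
  show dist (c (N - i)) (c (N - (i + 1))) ≤ s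
  have h1 : N - i = (N - (i+1)) + 1 := by omega
  rw [h1, dist_comm]
  exact hs _ (by omega)

theorem cc_trans {X : Type*} [PseudoMetricSpace X] {s : ℝ} {x y z : X}
    (h1 : ChainConnected s x y) (h2 : ChainConnected s y z) :
    ChainConnected s x z := by
  obtain ⟨N, c1, hc10, hc1N, hs1⟩ := h1
  obtain ⟨M, c2, hc20, hc2M, hs2⟩ := h2
  refine ⟨N + M, fun i => if i ≤ N then c1 i else c2 (i - N), by simpa, ?_, ?_⟩
  · show (if N + M ≤ N then c1 (N + M) else c2 (N + M - N)) = z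
    by_cases hM : M = 0
    · subst hM; simp [hc1N, ← hc20, hc2M]
    · rw [if_neg (by omega)]
      have : N + M - N = M := by omega
      rw [this, hc2M]
  · intro i hi
    show dist (if i ≤ N then c1 i else c2 (i - N))
        (if i + 1 ≤ N then c1 (i + 1) else c2 (i + 1 - N)) ≤ s
    by_cases ha : i + 1 ≤ N
    · rw [if_pos (by omega), if_pos ha]
      exact hs1 i (by omega)
    · by_cases hb : i ≤ N
      · have hiN : i = N := by omega
        rw [if_pos hb, if_neg ha, hiN, hc1N, ← hc20]
        have : N + 1 - N = 1 := by omega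
        rw [this]
        exact hs2 0 (by omega)
      · rw [if_neg hb, if_neg (by omega)]
        have : i + 1 - N = (i - N) + 1 := by omega
        rw [this]
        exact hs2 _ (by omega)

/-- **Statement 11.** A metric space has Nagata dimension zero if and only if there is a
constant `C ≥ 1` such that for every `s > 0` each `s`-chain component has diameter at
most `C * s`. -/
theorem nagataDim_zero_iff_chain_components {X : Type*} [MetricSpace X] :
    nagataDim (Set.univ : Set X) = 0 ↔
      ∃ C : ℝ, 1 ≤ C ∧ ∀ s : ℝ, 0 < s → ∀ x : X,
        IsBoundedBy dist {y : X | ChainConnected s x y} (C * s) := by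
  unfold nagataDim nagataDimWith
  constructor
  · intro h
    have h0 : (0 : ℕ∞) ∈ {N : ℕ∞ | ∃ n : ℕ, N = (n : ℕ∞) ∧ ∃ c : ℝ, 0 < c ∧ ∀ s : ℝ, 0 < s →
        ∃ B : Set (Set X), (∀ b ∈ B, b ⊆ Set.univ) ∧ Set.univ ⊆ ⋃₀ B ∧
          (∀ b ∈ B, IsBoundedBy dist b (c * s)) ∧
          ∀ T ⊆ Set.univ, IsBoundedBy dist T s →
            {b ∈ B | (T ∩ b).Nonempty}.encard ≤ (n : ℕ∞) + 1} := by
      by_contra h0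
      have h1 : (1 : ℕ∞) ≤ 0 := by
        rw [← h]
        refine le_sInf fun N hN => ?_
        rcases eq_or_ne N 0 with rfl | hne
        · exact absurd hN h0
        · exact ENat.one_le_iff_ne_zero.mpr hne
      simp at h1
    obtain ⟨n, hn0, c, hc, hcov⟩ := h0
    have hn : n = 0 := by exact_mod_cast hn0.symm
    subst hn
    refine ⟨max c 1, le_max_right _ _, fun s hs x => ?_⟩
    obtain ⟨B, hBsub, hBcov, hBdiam, hBmult⟩ := hcov s hs
    obtain ⟨β, hβB, hxβ⟩ := hBcov (Set.mem_univ x)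
    have key : ∀ y : X, ChainConnected s x y → y ∈ β := by
      rintro y ⟨N, ch, hch0, hchN, hchs⟩
      have main : ∀ i, i ≤ N → ch i ∈ β := by
        intro i
        induction i with
        | zero => intro _; rw [hch0]; exact hxβ
        | succ i ih =>
          intro hiN
          have hci : ch i ∈ β := ih (by omega)
          obtain ⟨β', hβ'B, hmem⟩ := hBcov (Set.mem_univ (ch (i + 1)))
          have hTb : IsBoundedBy dist ({ch i, ch (i + 1)} : Set X) s := by
            intro u hu v hv
            rcases hu with rfl | rfl <;> rcases hv with rfl | rfl
            · simp [hs.le]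
            · exact hchs i (by omega)
            · rw [dist_comm]; exact hchs i (by omega)
            · simp [hs.le]
          have hmult := hBmult _ (Set.subset_univ _) hTb
          have hone : {b ∈ B | (({ch i, ch (i + 1)} : Set X) ∩ b).Nonempty}.encard ≤ 1 := by
            simpa using hmult
          rw [Set.encard_le_one_iff] at hone
          have heq : β = β' :=
            hone _ _ ⟨hβB, ⟨ch i, Set.mem_insert _ _, hci⟩⟩
              ⟨hβ'B, ⟨ch (i + 1), Set.mem_insert_of_mem _ rfl, hmem⟩⟩
          rw [heq]; exact hmem
      rw [← hchN]; exact main N le_rfl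
    intro y1 hy1 y2 hy2
    have := hBdiam β hβB y1 (key y1 hy1) y2 (key y2 hy2)
    calc dist y1 y2 ≤ c * s := this
      _ ≤ max c 1 * s := by
        exact mul_le_mul_of_nonneg_right (le_max_left _ _) hs.le
  · rintro ⟨C, hC, hcomp⟩
    refine le_antisymm ?_ zero_le
    refine sInf_le ⟨0, by simp, C, lt_of_lt_of_le one_pos hC, fun s hs => ?_⟩
    refine ⟨{b | ∃ x : X, b = {y | ChainConnected s x y}}, fun b _ => Set.subset_univ b,
      fun x _ => ⟨_, ⟨x, rfl⟩, cc_refl s x⟩, ?_, ?_⟩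
    · rintro b ⟨x, rfl⟩
      exact hcomp s hs x
    · intro T _ hT
      have h1 : ((0 : ℕ) : ℕ∞) + 1 = 1 := by simp
      rw [h1, Set.encard_le_one_iff]
      rintro b1 b2 ⟨⟨x1, rfl⟩, t1, ht1T, ht1⟩ ⟨⟨x2, rfl⟩, t2, ht2T, ht2⟩
      have h12 : ChainConnected s t1 t2 :=
        ⟨1, fun i => if i = 0 then t1 else t2, by simp, by simp, fun i hi => by
          have : i = 0 := by omega
          subst this
          simpa using hT t1 ht1T t2 ht2T⟩
      have hx : ChainConnected s x1 x2 := cc_trans ht1 (cc_trans h12 (cc_symm ht2))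
      ext y
      simp only [Set.mem_setOf_eq]
      exact ⟨fun hy => cc_trans (cc_symm hx) hy, fun hy => cc_trans hx hy⟩
end

section
/- Fix a natural number n ≥ 1 and let g : ℂ → ℂ be given by g(z) = z^n. Then dim_N X = dim_N g(X) for every subset X ⊆ ℂ (with the Euclidean metric). -/
open Set Metric

namespace NagPf
open Finset Real
variable {α : Type*} {β : Type*}

/-- The covering property at a fixed `n`. -/
def NagProp (d : α → α → ℝ) (X : Set α) (n : ℕ) : Prop :=
  ∃ c : ℝ, 0 < c ∧ ∀ s : ℝ, 0 < s →
    ∃ B : Set (Set α), (∀ b ∈ B, b ⊆ X) ∧ X ⊆ ⋃₀ B ∧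
      (∀ b ∈ B, IsBoundedBy d b (c * s)) ∧
      ∀ T ⊆ X, IsBoundedBy d T s → {b ∈ B | (T ∩ b).Nonempty}.encard ≤ (n : ℕ∞) + 1

lemma nagataDimWith_eq (d : α → α → ℝ) (X : Set α) :
    nagataDimWith d X = sInf {N : ℕ∞ | ∃ n : ℕ, N = (n : ℕ∞) ∧ NagProp d X n} := rfl

lemma NagProp.mono_n {d : α → α → ℝ} {X : Set α} {n m : ℕ} (h : NagProp d X n)
    (hnm : n ≤ m) : NagProp d X m := by
  obtain ⟨c, hc, H⟩ := h
  refine ⟨c, hc, fun s hs => ?_⟩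
  obtain ⟨B, h1, h2, h3, h4⟩ := H s hs
  refine ⟨B, h1, h2, h3, fun T hT hTb => le_trans (h4 T hT hTb) ?_⟩
  have : (n : ℕ∞) ≤ (m : ℕ∞) := by exact_mod_cast hnm
  exact add_le_add_left this 1

lemma nag_le_iff {d : α → α → ℝ} {X : Set α} {N : ℕ} :
    nagataDimWith d X ≤ (N : ℕ∞) ↔ NagProp d X N := by
  constructor
  · intro h
    rw [nagataDimWith_eq] at h
    by_contra hN
    have hbig : ∀ x ∈ {N : ℕ∞ | ∃ n : ℕ, N = (n : ℕ∞) ∧ NagProp d X n},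
        ((N : ℕ∞) + 1) ≤ x := by
      rintro x ⟨n, rfl, hn⟩
      by_contra hlt
      push_neg at hlt
      have hnN : n ≤ N := by
        have h2 : ((n : ℕ∞)) < ((N+1 : ℕ) : ℕ∞) := by
          rw [Nat.cast_add, Nat.cast_one]; exact hlt
        rw [Nat.cast_lt] at h2
        omega
      exact hN (hn.mono_n hnN)
    have h3 := le_trans (le_sInf hbig) h
    have h4 : ((N+1 : ℕ) : ℕ∞) ≤ ((N : ℕ) : ℕ∞) := by
      rw [Nat.cast_add, Nat.cast_one]; exact h3
    rw [Nat.cast_le] at h4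
    omega
  · intro h
    exact sInf_le ⟨N, rfl, h⟩

lemma dim_le_dim_of_imp {d d' : α → α → ℝ} {X X' : Set α}
    (h : ∀ M : ℕ, NagProp d X M → NagProp d' X' M) :
    nagataDimWith d' X' ≤ nagataDimWith d X := by
  rcases eq_or_ne (nagataDimWith d X) ⊤ with ht | ht
  · simp [ht]
  · have hco : ((nagataDimWith d X).toNat : ℕ∞) = nagataDimWith d X := ENat.coe_toNat ht
    calc nagataDimWith d' X' ≤ ((nagataDimWith d X).toNat : ℕ∞) :=
          nag_le_iff.mpr (h _ (nag_le_iff.mp hco.ge))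
      _ = nagataDimWith d X := hco

/-- A coloring of `V` at scale `s` with `N+1` colors: each color class is a family of
`c*s`-bounded subsets of `V`, any two distinct members of the same class are more than
`s` apart, and the union of all classes covers `V`. -/
def IsColoring (d : α → α → ℝ) (V : Set α) (N : ℕ) (c s : ℝ)
    (F : Fin (N + 1) → Set (Set α)) : Prop :=
  (∀ k, ∀ M ∈ F k, M ⊆ V) ∧
  (∀ x ∈ V, ∃ k, ∃ M ∈ F k, x ∈ M) ∧
  (∀ k, ∀ M ∈ F k, ∀ x ∈ M, ∀ y ∈ M, d x y ≤ c * s) ∧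
  (∀ k, ∀ M ∈ F k, ∀ M' ∈ F k, ∀ x ∈ M, ∀ y ∈ M', d x y ≤ s → M = M')

def HasColorings (d : α → α → ℝ) (V : Set α) (N : ℕ) : Prop :=
  ∃ c : ℝ, 0 < c ∧ ∀ s : ℝ, 0 < s → ∃ F, IsColoring d V N c s F

lemma HasColorings.large_const {d : α → α → ℝ} {V : Set α} {N : ℕ}
    (h : HasColorings d V N) :
    ∃ c : ℝ, 1 ≤ c ∧ ∀ s : ℝ, 0 < s → ∃ F, IsColoring d V N c s F := by
  obtain ⟨c, hc, H⟩ := h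
  refine ⟨max c 1, le_max_right _ _, fun s hs => ?_⟩
  obtain ⟨F, h1, h2, h3, h4⟩ := H s hs
  exact ⟨F, h1, h2, fun k M hM x hx y hy =>
    le_trans (h3 k M hM x hx y hy) (by nlinarith [le_max_left c 1]), h4⟩

/-- Colorings with `N+1` colors give the covering property at `N`. -/
lemma HasColorings.nagProp {d : α → α → ℝ} {V : Set α} {N : ℕ}
    (h : HasColorings d V N) : NagProp d V N := by
  classical
  obtain ⟨c, hc, H⟩ := h
  refine ⟨c, hc, fun s hs => ?_⟩
  obtain ⟨F, hsub, hcov, hdiam, hsep⟩ := H s hs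
  refine ⟨{M | ∃ k, M ∈ F k}, ?_, ?_, ?_, ?_⟩
  · rintro b ⟨k, hk⟩; exact hsub k b hk
  · intro x hx
    obtain ⟨k, M, hM, hxM⟩ := hcov x hx
    exact ⟨M, ⟨k, hM⟩, hxM⟩
  · rintro b ⟨k, hk⟩; exact hdiam k b hk
  · intro T hTV hTb
    set met := {b ∈ {M | ∃ k, M ∈ F k} | (T ∩ b).Nonempty} with hmet
    set f : Set α → Fin (N + 1) := fun b => if h : ∃ k, b ∈ F k then h.choose else 0 with hf
    have hinj : Set.InjOn f met := by
      rintro b ⟨⟨k, hk⟩, x, hxT, hxb⟩ b' ⟨⟨k', hk'⟩, y, hyT, hyb⟩ hfe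
      have hb : b ∈ F (f b) := by
        rw [hf]; simp only []
        rw [dif_pos ⟨k, hk⟩]
        exact (Exists.choose_spec (⟨k, hk⟩ : ∃ k, b ∈ F k))
      have hb' : b' ∈ F (f b') := by
        rw [hf]; simp only []
        rw [dif_pos ⟨k', hk'⟩]
        exact (Exists.choose_spec (⟨k', hk'⟩ : ∃ k, b' ∈ F k))
      rw [hfe] at hb
      exact hsep (f b') b hb b' hb' x hxb y hyb (hTb x hxT y hyT)
    calc met.encard = (f '' met).encard := (hinj.encard_image).symm
      _ ≤ (Set.univ : Set (Fin (N + 1))).encard := Set.encard_mono (Set.subset_univ _)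
      _ = ((N : ℕ∞) + 1) := by
          rw [Set.encard_univ]
          simp [ENat.card_eq_coe_fintype_card]

lemma HasColorings.mono {d : α → α → ℝ} {V W : Set α} {N : ℕ}
    (h : HasColorings d V N) (hWV : W ⊆ V) : HasColorings d W N := by
  obtain ⟨c, hc, H⟩ := h
  refine ⟨c, hc, fun s hs => ?_⟩
  obtain ⟨F, hsub, hcov, hdiam, hsep⟩ := H s hs
  refine ⟨fun k => (fun M => M ∩ W) '' F k, ?_, ?_, ?_, ?_⟩
  · rintro k M ⟨M₀, hM₀, rfl⟩; exact inter_subset_right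
  · intro x hx
    obtain ⟨k, M, hM, hxM⟩ := hcov x (hWV hx)
    exact ⟨k, M ∩ W, ⟨M, hM, rfl⟩, hxM, hx⟩
  · rintro k M ⟨M₀, hM₀, rfl⟩ x hx y hy
    exact hdiam k M₀ hM₀ x hx.1 y hy.1
  · rintro k M ⟨M₀, hM₀, rfl⟩ M' ⟨M₀', hM₀', rfl⟩ x hx y hy hd
    rw [hsep k M₀ hM₀ M₀' hM₀' x hx.1 y hy.1 hd]

lemma hasColorings_of_subsingleton {d : α → α → ℝ} {V : Set α} {N : ℕ}
    (hd0 : ∀ x, d x x = 0) (hV : V.Subsingleton) : HasColorings d V N := by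
  refine ⟨1, one_pos, fun s hs => ?_⟩
  refine ⟨fun k => if k = 0 then {V} else ∅, ?_, ?_, ?_, ?_⟩
  · intro k M hM
    by_cases hk : k = 0
    · rw [hk] at hM; simp at hM; simp [hM]
    · simp [hk] at hM
  · intro x hx; exact ⟨0, V, by simp, hx⟩
  · intro k M hM x hx y hy
    by_cases hk : k = 0
    · rw [hk] at hM; simp at hM; subst hM
      rw [hV hx hy, hd0]
      positivity
    · simp [hk] at hM
  · intro k M hM M' hM' x hx y hy hd
    by_cases hk : k = 0
    · rw [hk] at hM hM'; simp at hM hM'; rw [hM, hM']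
    · simp [hk] at hM


/-- From covers with multiplicity `n+1` to colorings with `n+1` colors. -/
lemma NagProp.hasColorings {d : α → α → ℝ} {X : Set α} {n : ℕ}
    (hd0 : ∀ x, d x x = 0) (hsy : ∀ x y, d x y = d y x)
    (htr : ∀ x y z, d x z ≤ d x y + d y z)
    (h : NagProp d X n) : HasColorings d X n := by
  classical
  obtain ⟨c, hc, H⟩ := h
  refine ⟨3 * n + 3 * c * (n + 2) + 1, by positivity, fun s hs => ?_⟩
  have hu : (0:ℝ) < 3 * ((n:ℝ) + 2) * s := by positivity
  obtain ⟨B, hBsub, hBcov, hBdiam, hBmult⟩ := H (3 * ((n:ℝ) + 2) * s) hu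
  set u := 3 * ((n:ℝ) + 2) * s with hu_def
  set t := 3 * s / 2 with ht_def
  have ht : 0 < t := by rw [ht_def]; linarith
  -- the families of members within distance k*t of x
  set NS : α → ℕ → Set (Set α) := fun x k => {b | b ∈ B ∧ ∃ y ∈ b, d x y ≤ (k:ℝ) * t}
    with hNS_def
  have hNSmono : ∀ x, ∀ {k k' : ℕ}, k ≤ k' → NS x k ⊆ NS x k' := by
    intro x k k' hkk b hb
    refine ⟨hb.1, ?_⟩
    obtain ⟨y, hy, hdy⟩ := hb.2
    refine ⟨y, hy, le_trans hdy ?_⟩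
    have : (k:ℝ) ≤ (k':ℝ) := by exact_mod_cast hkk
    nlinarith
  have hNScard : ∀ x ∈ X, ∀ k : ℕ, k ≤ n + 2 → (NS x k).encard ≤ (n : ℕ∞) + 1 := by
    intro x hx k hk
    have hT : {y ∈ X | d x y ≤ (k:ℝ) * t} ⊆ X := sep_subset _ _
    have hTb : IsBoundedBy d {y ∈ X | d x y ≤ (k:ℝ) * t} u := by
      intro y hy y' hy'
      have h1 : d y y' ≤ d y x + d x y' := htr y x y'
      have h2 : d y x = d x y := hsy y x
      have hkr : (k:ℝ) ≤ (n:ℝ) + 2 := by exact_mod_cast hk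
      have hyb := hy.2; have hy'b := hy'.2
      rw [hu_def, ht_def] at *
      nlinarith
    refine le_trans (Set.encard_mono ?_) (hBmult _ hT hTb)
    rintro b ⟨hbB, y, hyb, hdy⟩
    exact ⟨hbB, y, ⟨hBsub b hbB hyb, hdy⟩, hyb⟩
  -- the color of a point
  have hex : ∀ x ∈ X, ∃ j : ℕ, (NS x (j+1)).encard ≤ (j : ℕ∞) + 1 :=
    fun x hx => ⟨n, hNScard x hx (n+1) (by omega)⟩
  set col : α → ℕ := fun x => if hx : x ∈ X then Nat.find (hex x hx) else 0 with hcol_def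
  have hcol_le : ∀ x (hx : x ∈ X), col x ≤ n := by
    intro x hx
    rw [hcol_def]; simp only [dif_pos hx]
    exact Nat.find_le (hNScard x hx (n+1) (by omega))
  have hcol_spec : ∀ x (hx : x ∈ X), (NS x (col x + 1)).encard ≤ (col x : ℕ∞) + 1 := by
    intro x hx
    rw [hcol_def]; simp only [dif_pos hx]
    exact Nat.find_spec (hex x hx)
  have hcol_min : ∀ x (hx : x ∈ X) (j : ℕ), j < col x →
      ¬ (NS x (j+1)).encard ≤ (j : ℕ∞) + 1 := by
    intro x hx j hj
    rw [hcol_def] at hj; simp only [dif_pos hx] at hj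
    exact Nat.find_min (hex x hx) hj
  -- there is a member containing x, so NS x 0 is nonempty
  have hNS0 : ∀ x ∈ X, (NS x 0).Nonempty := by
    intro x hx
    obtain ⟨b, hbB, hxb⟩ := hBcov hx
    exact ⟨b, hbB, x, hxb, by rw [hd0]; simp⟩
  have hcard_lower : ∀ x (hx : x ∈ X), (col x : ℕ∞) + 1 ≤ (NS x (col x)).encard := by
    intro x hx
    rcases Nat.eq_zero_or_pos (col x) with h0 | hpos
    · rw [h0]; simpa using Set.one_le_encard_iff_nonempty.mpr (hNS0 x hx)
    · obtain ⟨j, hj⟩ := Nat.exists_eq_add_of_lt hpos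
      have hmin := hcol_min x hx j (by omega)
      push_neg at hmin
      have hj' : col x = j + 1 := by omega
      rw [hj']
      have : ((j:ℕ∞) + 1) + 1 ≤ (NS x (j+1)).encard := Order.add_one_le_of_lt hmin
      calc ((j+1 : ℕ) : ℕ∞) + 1 = ((j:ℕ∞)+1)+1 := by push_cast; ring
        _ ≤ (NS x (j+1)).encard := this
  -- NS x (col x) = NS x (col x + 1)
  have hstable : ∀ x (hx : x ∈ X), NS x (col x) = NS x (col x + 1) := by
    intro x hx
    have hfin : (NS x (col x + 1)).Finite := by
      refine Set.finite_of_encard_le_coe (k := n + 1) ?_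
      refine le_trans (hcol_spec x hx) ?_
      have := hcol_le x hx
      push_cast
      have : (col x : ℕ∞) ≤ (n : ℕ∞) := by exact_mod_cast this
      exact add_le_add_left this 1
    refine Set.Finite.eq_of_subset_of_encard_le' ?_ (hNSmono x (by omega)) ?_
    · exact hfin.subset (hNSmono x (by omega))
    · exact le_trans (hcol_spec x hx) (hcard_lower x hx)
  -- the coloring
  refine ⟨fun k => {M | ∃ 𝒩 : Set (Set α),
      M = {x | x ∈ X ∧ col x = (k : ℕ) ∧ NS x (k : ℕ) = 𝒩}}, ?_, ?_, ?_, ?_⟩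
  · rintro k M ⟨𝒩, rfl⟩
    exact fun x hx => hx.1
  · intro x hx
    have hle : col x < n + 1 := by have := hcol_le x hx; omega
    exact ⟨⟨col x, hle⟩, ⟨{y | y ∈ X ∧ col y = col x ∧ NS y (col x) = NS x (col x)},
      ⟨NS x (col x), rfl⟩, hx, rfl, rfl⟩⟩
  · rintro k M ⟨𝒩, rfl⟩ x hx y hy
    -- diameter bound
    obtain ⟨hxX, hcx, hNx⟩ := hx
    obtain ⟨hyX, hcy, hNy⟩ := hy
    have hne : 𝒩.Nonempty := by
      rw [← hNx]
      obtain ⟨b, hb⟩ := hNS0 x hxX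
      exact ⟨b, hNSmono x (by omega) hb⟩
    obtain ⟨b, hb⟩ := hne
    have hbx : b ∈ NS x (k:ℕ) := by rw [hNx]; exact hb
    have hby : b ∈ NS y (k:ℕ) := by rw [hNy]; exact hb
    obtain ⟨hbB, x1, hx1b, hdx1⟩ := hbx
    obtain ⟨_, y1, hy1b, hdy1⟩ := hby
    have hd1 : d x1 y1 ≤ c * u := hBdiam b hbB x1 hx1b y1 hy1b
    have h2 : d x y ≤ d x x1 + d x1 y1 + d y1 y := by
      calc d x y ≤ d x x1 + d x1 y := htr x x1 y
        _ ≤ d x x1 + (d x1 y1 + d y1 y) := by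
            have := htr x1 y1 y; linarith
        _ = _ := by ring
    have hky : d y1 y = d y y1 := hsy y1 y
    have hkn : ((k:ℕ):ℝ) ≤ (n:ℝ) := by
      have : (k:ℕ) ≤ n := by omega
      exact_mod_cast this
    rw [hu_def] at hd1
    rw [ht_def] at hdx1 hdy1
    nlinarith
  · rintro k M ⟨𝒩, rfl⟩ M' ⟨𝒩', rfl⟩ x hx y hy hdxy
    obtain ⟨hxX, hcx, hNx⟩ := hx
    obtain ⟨hyX, hcy, hNy⟩ := hy
    -- show NS y k = NS x k
    have hsub : NS y (k:ℕ) ⊆ NS x ((k:ℕ) + 1) := by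
      rintro b ⟨hbB, z, hzb, hdz⟩
      refine ⟨hbB, z, hzb, ?_⟩
      have := htr x y z
      have hst : s ≤ t := by rw [ht_def]; linarith
      push_cast
      nlinarith
    have hcx' : col x = (k:ℕ) := hcx
    have hcy' : col y = (k:ℕ) := hcy
    have hxstab : NS x (col x) = NS x (col x + 1) := hstable x hxX
    rw [hcx'] at hxstab
    have hsub2 : NS y (k:ℕ) ⊆ NS x (k:ℕ) := by rw [hxstab]; exact hsub
    have hcardy : ((k:ℕ) : ℕ∞) + 1 ≤ (NS y (k:ℕ)).encard := by
      have := hcard_lower y hyX; rwa [hcy'] at this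
    have hcardx : (NS x ((k:ℕ))).encard ≤ ((k:ℕ) : ℕ∞) + 1 := by
      rw [hxstab]
      have := hcol_spec x hxX; rwa [hcx'] at this
    have hfin : (NS x (k:ℕ)).Finite := by
      refine Set.finite_of_encard_le_coe (k := (k:ℕ) + 1) ?_
      refine le_trans hcardx ?_
      push_cast
      exact le_refl _
    have heq : NS y (k:ℕ) = NS x (k:ℕ) :=
      Set.Finite.eq_of_subset_of_encard_le' hfin hsub2
        (le_trans hcardx hcardy)
    have h𝒩 : 𝒩 = 𝒩' := by rw [← hNx, ← hNy, heq]
    rw [h𝒩]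


lemma hasColorings_empty (d : α → α → ℝ) (N : ℕ) : HasColorings d ∅ N :=
  ⟨1, one_pos, fun s _ => ⟨fun _ => ∅, by simp, by simp, by simp, by simp⟩⟩

/-- Union theorem: colorings on `A` and `B` combine to a coloring on `A ∪ B`
with the same number of colors. -/
lemma HasColorings.union {d : α → α → ℝ} {A B : Set α} {N : ℕ}
    (hsy : ∀ x y, d x y = d y x) (htr : ∀ x y z, d x z ≤ d x y + d y z)
    (hA : HasColorings d A N) (hB : HasColorings d B N) :
    HasColorings d (A ∪ B) N := by
  classical
  obtain ⟨cA, hcA, HA⟩ := hA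
  obtain ⟨cB, hcB, HB⟩ := hB
  refine ⟨cA * (cB + 2) + 2 * cB + 2, by positivity, fun s hs => ?_⟩
  set S := (cB + 2) * s with hS_def
  have hS : 0 < S := by positivity
  have hsS : s ≤ S := by nlinarith
  obtain ⟨F, hFsub, hFcov, hFdiam, hFsep⟩ := HA S hS
  obtain ⟨G, hGsub, hGcov, hGdiam, hGsep⟩ := HB s hs
  -- Near b a : some point of b is within s of some point of a
  set Near : Set α → Set α → Prop := fun b a => ∃ x ∈ b, ∃ y ∈ a, d x y ≤ s with hNear
  -- at most one member of F k is near a given b ∈ G k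
  have hUniq : ∀ (k : Fin (N+1)) (b : Set α), b ∈ G k → ∀ a ∈ F k, ∀ a' ∈ F k,
      Near b a → Near b a' → a = a' := by
    rintro k b hb a ha a' ha' ⟨x, hxb, y, hya, hxy⟩ ⟨x', hx'b, y', hy'a', hx'y'⟩
    refine hFsep k a ha a' ha' y hya y' hy'a' ?_
    have h1 : d y y' ≤ d y x + d x y' := htr y x y'
    have h2 : d x y' ≤ d x x' + d x' y' := htr x x' y'
    have h3 : d y x = d x y := hsy y x
    have h4 : d x x' ≤ cB * s := hGdiam k b hb x hxb x' hx'b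
    rw [hS_def]; nlinarith
  -- the choice of a nearby member
  set pick : Fin (N+1) → Set α → Set α := fun k b =>
    if h : ∃ a ∈ F k, Near b a then h.choose else ∅ with hpick
  have hpick_spec : ∀ k b, (∃ a ∈ F k, Near b a) →
      pick k b ∈ F k ∧ Near b (pick k b) := by
    intro k b h
    rw [hpick]; simp only [dif_pos h]
    exact ⟨h.choose_spec.1, h.choose_spec.2⟩
  -- merged member for a ∈ F k
  set Mg : Fin (N+1) → Set α → Set α := fun k a =>
    a ∪ ⋃₀ {b | b ∈ G k ∧ (∃ a' ∈ F k, Near b a') ∧ pick k b = a} with hMg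
  set H : Fin (N+1) → Set (Set α) := fun k =>
    {M | ∃ a ∈ F k, M = Mg k a} ∪ {b | b ∈ G k ∧ ¬ ∃ a ∈ F k, Near b a} with hH
  have hMg_mem : ∀ k a x, x ∈ Mg k a ↔
      (x ∈ a ∨ ∃ b, (b ∈ G k ∧ (∃ a' ∈ F k, Near b a') ∧ pick k b = a) ∧ x ∈ b) := by
    intro k a x
    rw [hMg]
    simp only [Set.mem_union, Set.mem_sUnion, Set.mem_setOf_eq]
  refine ⟨H, ?_, ?_, ?_, ?_⟩
  · -- subsets
    rintro k M (⟨a, ha, rfl⟩ | ⟨hb, _⟩)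
    · intro x hx
      rcases (hMg_mem k a x).mp hx with h | ⟨b, ⟨hbG, _, _⟩, hxb⟩
      · exact Or.inl (hFsub k a ha h)
      · exact Or.inr (hGsub k b hbG hxb)
    · exact fun x hx => Or.inr (hGsub k _ hb hx)
  · -- cover
    rintro x (hx | hx)
    · obtain ⟨k, a, ha, hxa⟩ := hFcov x hx
      exact ⟨k, Mg k a, Or.inl ⟨a, ha, rfl⟩, (hMg_mem k a x).mpr (Or.inl hxa)⟩
    · obtain ⟨k, b, hb, hxb⟩ := hGcov x hx
      by_cases hnear : ∃ a ∈ F k, Near b a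
      · refine ⟨k, Mg k (pick k b), Or.inl ⟨pick k b, (hpick_spec k b hnear).1, rfl⟩, ?_⟩
        exact (hMg_mem k _ x).mpr (Or.inr ⟨b, ⟨hb, hnear, rfl⟩, hxb⟩)
      · exact ⟨k, b, Or.inr ⟨hb, hnear⟩, hxb⟩
  · -- diameter
    rintro k M (⟨a, ha, rfl⟩ | ⟨hb, _⟩)
    · intro x hx y hy
      rcases (hMg_mem k a x).mp hx with hxa | ⟨b, ⟨hbG, hbn, hbp⟩, hxb⟩ <;>
        rcases (hMg_mem k a y).mp hy with hya | ⟨b', ⟨hb'G, hb'n, hb'p⟩, hyb'⟩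
      · have := hFdiam k a ha x hxa y hya
        rw [hS_def] at this; nlinarith
      · -- x ∈ a, y ∈ b'
        have hnear : Near b' (pick k b') := (hpick_spec k b' hb'n).2
        rw [hb'p] at hnear
        obtain ⟨z, hzb', w, hwa, hzw⟩ := hnear
        have h1 : d x y ≤ d x w + d w z + d z y := by
          have t1 := htr x w y
          have t2 := htr w z y
          linarith
        have h2 : d x w ≤ cA * S := hFdiam k a ha x hxa w hwa
        have h3 : d w z = d z w := hsy w z
        have h4 : d z y = d y z := hsy z y
        have h5 : d y z ≤ cB * s := hGdiam k b' hb'G y hyb' z hzb'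
        rw [hS_def] at h2; nlinarith
      · -- x ∈ b, y ∈ a : symmetric
        have hnear : Near b (pick k b) := (hpick_spec k b hbn).2
        rw [hbp] at hnear
        obtain ⟨z, hzb, w, hwa, hzw⟩ := hnear
        have h1 : d x y ≤ d x z + d z w + d w y := by
          have t1 := htr x z y
          have t2 := htr z w y
          linarith
        have h2 : d x z ≤ cB * s := hGdiam k b hbG x hxb z hzb
        have h3 : d w y = d y w := hsy w y
        have h4 : d y w ≤ cA * S := hFdiam k a ha y hya w hwa
        rw [hS_def] at h4; nlinarith
      · -- x ∈ b, y ∈ b'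
        have hnb : Near b (pick k b) := (hpick_spec k b hbn).2
        have hnb' : Near b' (pick k b') := (hpick_spec k b' hb'n).2
        rw [hbp] at hnb; rw [hb'p] at hnb'
        obtain ⟨z, hzb, w, hwa, hzw⟩ := hnb
        obtain ⟨z', hz'b', w', hw'a, hz'w'⟩ := hnb'
        have h1 : d x y ≤ d x z + d z w + d w w' + d w' z' + d z' y := by
          have t1 := htr x z y
          have t2 := htr z w y
          have t3 := htr w w' y
          have t4 := htr w' z' y
          linarith
        have h2 : d x z ≤ cB * s := hGdiam k b hbG x hxb z hzb
        have h3 : d w w' ≤ cA * S := hFdiam k a ha w hwa w' hw'a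
        have h4 : d w' z' = d z' w' := hsy w' z'
        have h5 : d z' y = d y z' := hsy z' y
        have h6 : d y z' ≤ cB * s := hGdiam k b' hb'G y hyb' z' hz'b'
        rw [hS_def] at h3; nlinarith
    · intro x hx y hy
      have := hGdiam k _ hb x hx y hy
      nlinarith
  · -- separation
    rintro k M hM M' hM' x hx y hy hdxy
    by_contra hne
    rcases hM with ⟨a, ha, rfl⟩ | ⟨hbG, hbfar⟩ <;> rcases hM' with ⟨a', ha', rfl⟩ | ⟨hb'G, hb'far⟩
    · -- both merged
      have hane : a ≠ a' := fun h => hne (by rw [h])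
      rcases (hMg_mem k a x).mp hx with hxa | ⟨b, ⟨hbG, hbn, hbp⟩, hxb⟩ <;>
        rcases (hMg_mem k a' y).mp hy with hya | ⟨b', ⟨hb'G, hb'n, hb'p⟩, hyb'⟩
      · exact hane (hFsep k a ha a' ha' x hxa y hya (le_trans hdxy hsS))
      · -- x ∈ a, y ∈ b' with pick b' = a'
        have h1 : Near b' a := ⟨y, hyb', x, hxa, by rw [hsy]; exact hdxy⟩
        have h2 : Near b' (pick k b') := (hpick_spec k b' hb'n).2
        rw [hb'p] at h2
        exact hane (hUniq k b' hb'G a ha a' ha' h1 h2)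
      · have h1 : Near b a' := ⟨x, hxb, y, hya, hdxy⟩
        have h2 : Near b (pick k b) := (hpick_spec k b hbn).2
        rw [hbp] at h2
        exact hane (hUniq k b hbG a ha a' ha' h2 h1)
      · -- x ∈ b, y ∈ b'
        have hbb' : b ≠ b' := by
          intro h; subst h
          exact hane (hbp ▸ hb'p ▸ rfl)
        exact hbb' (hGsep k b hbG b' hb'G x hxb y hyb' hdxy)
    · -- merged vs standalone
      rcases (hMg_mem k a x).mp hx with hxa | ⟨b, ⟨hbG, hbn, hbp⟩, hxb⟩
      · exact hb'far ⟨a, ha, y, hy, x, hxa, by rw [hsy]; exact hdxy⟩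
      · have hbb' : b ≠ M' := by
          intro h; subst h
          exact hb'far hbn
        exact hbb' (hGsep k b hbG M' hb'G x hxb y hy hdxy)
    · -- standalone vs merged
      rcases (hMg_mem k a' y).mp hy with hya | ⟨b', ⟨hb'G, hb'n, hb'p⟩, hyb'⟩
      · exact hbfar ⟨a', ha', x, hx, y, hya, hdxy⟩
      · have hbb' : M ≠ b' := by
          intro h; subst h
          exact hbfar hb'n
        exact hbb' (hGsep k M hbG b' hb'G x hx y hyb' hdxy)
    · exact hne (hGsep k M hbG M' hb'G x hx y hy hdxy)

/-- finite unions -/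
lemma hasColorings_iUnion {m : ℕ} {d : α → α → ℝ} {N : ℕ}
    (hsy : ∀ x y, d x y = d y x) (htr : ∀ x y z, d x z ≤ d x y + d y z)
    (Vf : Fin m → Set α) (h : ∀ i, HasColorings d (Vf i) N) :
    HasColorings d (⋃ i, Vf i) N := by
  induction m with
  | zero => simpa using hasColorings_empty d N
  | succ m ih =>
    have : (⋃ i, Vf i) = Vf 0 ∪ ⋃ i : Fin m, Vf i.succ := by
      ext x
      simp only [Set.mem_iUnion, Set.mem_union]
      constructor
      · rintro ⟨i, hi⟩
        rcases Fin.eq_zero_or_eq_succ i with h0 | ⟨j, rfl⟩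
        · exact Or.inl (h0 ▸ hi)
        · exact Or.inr ⟨j, hi⟩
      · rintro (h0 | ⟨j, hj⟩)
        · exact ⟨0, h0⟩
        · exact ⟨j.succ, hj⟩
    rw [this]
    exact (h 0).union hsy htr (ih (fun i => Vf i.succ) (fun i => h i.succ))


/-- Covers transport perfectly along a map: pullback distance on `X` vs. image. -/
lemma nagProp_image_iff (f : α → β) (D : β → β → ℝ) (X : Set α) (n : ℕ) :
    NagProp (fun x y => D (f x) (f y)) X n ↔ NagProp D (f '' X) n := by
  constructor
  · rintro ⟨c, hc, H⟩
    refine ⟨c, hc, fun s hs => ?_⟩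
    obtain ⟨B, h1, h2, h3, h4⟩ := H s hs
    refine ⟨(fun b => f '' b) '' B, ?_, ?_, ?_, ?_⟩
    · rintro b ⟨b₀, hb₀, rfl⟩
      exact image_mono (h1 b₀ hb₀)
    · rintro y ⟨x, hx, rfl⟩
      obtain ⟨b, hb, hxb⟩ := h2 hx
      exact ⟨f '' b, ⟨b, hb, rfl⟩, ⟨x, hxb, rfl⟩⟩
    · rintro b ⟨b₀, hb₀, rfl⟩ _ ⟨u, hu, rfl⟩ _ ⟨v, hv, rfl⟩
      exact h3 b₀ hb₀ u hu v hv
    · intro T hT hTb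
      set T' := f ⁻¹' T ∩ X with hT'
      have hT'X : T' ⊆ X := inter_subset_right
      have hT'b : IsBoundedBy (fun x y => D (f x) (f y)) T' s := by
        intro x hx y hy
        exact hTb (f x) hx.1 (f y) hy.1
      have hsub : {b ∈ (fun b => f '' b) '' B | (T ∩ b).Nonempty} ⊆
          (fun b => f '' b) '' {b ∈ B | (T' ∩ b).Nonempty} := by
        rintro b ⟨⟨b₀, hb₀, rfl⟩, y, hyT, x, hxb₀, rfl⟩
        exact ⟨b₀, ⟨hb₀, x, ⟨hyT, h1 b₀ hb₀ hxb₀⟩, hxb₀⟩, rfl⟩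
      calc {b ∈ (fun b => f '' b) '' B | (T ∩ b).Nonempty}.encard
          ≤ ((fun b => f '' b) '' {b ∈ B | (T' ∩ b).Nonempty}).encard := Set.encard_mono hsub
        _ ≤ {b ∈ B | (T' ∩ b).Nonempty}.encard := Set.encard_image_le _ _
        _ ≤ (n : ℕ∞) + 1 := h4 T' hT'X hT'b
  · rintro ⟨c, hc, H⟩
    refine ⟨c, hc, fun s hs => ?_⟩
    obtain ⟨B, h1, h2, h3, h4⟩ := H s hs
    refine ⟨(fun b => f ⁻¹' b ∩ X) '' B, ?_, ?_, ?_, ?_⟩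
    · rintro b ⟨b₀, hb₀, rfl⟩
      exact inter_subset_right
    · intro x hx
      obtain ⟨b, hb, hxb⟩ := h2 ⟨x, hx, rfl⟩
      exact ⟨f ⁻¹' b ∩ X, ⟨b, hb, rfl⟩, hxb, hx⟩
    · rintro b ⟨b₀, hb₀, rfl⟩ x hx y hy
      exact h3 b₀ hb₀ (f x) hx.1 (f y) hy.1
    · intro T hT hTb
      have hT' : f '' T ⊆ f '' X := image_mono hT
      have hT'b : IsBoundedBy D (f '' T) s := by
        rintro _ ⟨x, hx, rfl⟩ _ ⟨y, hy, rfl⟩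
        exact hTb x hx y hy
      have hsub : {b ∈ (fun b => f ⁻¹' b ∩ X) '' B | (T ∩ b).Nonempty} ⊆
          (fun b => f ⁻¹' b ∩ X) '' {b ∈ B | ((f '' T) ∩ b).Nonempty} := by
        rintro b ⟨⟨b₀, hb₀, rfl⟩, x, hxT, hxb, hxX⟩
        exact ⟨b₀, ⟨hb₀, f x, ⟨x, hxT, rfl⟩, hxb⟩, rfl⟩
      calc {b ∈ (fun b => f ⁻¹' b ∩ X) '' B | (T ∩ b).Nonempty}.encard
          ≤ ((fun b => f ⁻¹' b ∩ X) '' {b ∈ B | ((f '' T) ∩ b).Nonempty}).encard :=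
            Set.encard_mono hsub
        _ ≤ {b ∈ B | ((f '' T) ∩ b).Nonempty}.encard := Set.encard_image_le _ _
        _ ≤ (n : ℕ∞) + 1 := h4 (f '' T) hT' hT'b


/-- Core transfer lemma: colorings for the source distance `δ` yield colorings for
the target distance `tgt`, given a compatible system of levels, active levels and
scale conversion. -/
lemma transfer_colorings
    (V : Set α) (δ tgt : α → α → ℝ) (ℓ : α → ℤ) (N : ℕ) (c C : ℝ)
    (Active : ℝ → ℤ → Prop) (σ : ℝ → ℤ → ℝ)
    (htgtsy : ∀ x y, tgt x y = tgt y x)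
    (hc : 0 < c) (hC : 0 < C)
    (hcol : ∀ s : ℝ, 0 < s → ∃ F, IsColoring δ V N c s F)
    (hlev : ∀ x ∈ V, ∀ y ∈ V, ℓ x = ℓ y ∨ ℓ x + 2 ≤ ℓ y ∨ ℓ y + 2 ≤ ℓ x)
    (hσ : ∀ t : ℝ, 0 < t → ∀ j, Active t j → 0 < σ t j)
    (hmono : ∀ t : ℝ, ∀ j j' : ℤ, Active t j → j ≤ j' → Active t j')
    (hstab : ∀ t : ℝ, 0 < t → ∀ x ∈ V, ∀ y ∈ V, Active t (ℓ x) →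
      δ x y ≤ c * σ t (ℓ x) → ¬(ℓ x + 2 ≤ ℓ y) ∧ ¬(ℓ y + 2 ≤ ℓ x))
    (hsep : ∀ t : ℝ, 0 < t → ∀ x ∈ V, ∀ y ∈ V, ℓ x = ℓ y → Active t (ℓ x) →
      σ t (ℓ x) < δ x y → t < tgt x y)
    (hcross : ∀ t : ℝ, 0 < t → ∀ x ∈ V, ∀ y ∈ V, ℓ x + 2 ≤ ℓ y → Active t (ℓ y) →
      t < tgt x y)
    (hdiam : ∀ t : ℝ, 0 < t → ∀ x ∈ V, ∀ y ∈ V, ℓ x = ℓ y → Active t (ℓ x) →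
      δ x y ≤ c * σ t (ℓ x) → tgt x y ≤ C * t)
    (hblob : ∀ t : ℝ, 0 < t → ∀ x ∈ V, ∀ y ∈ V, ¬Active t (ℓ x) → ¬Active t (ℓ y) →
      tgt x y ≤ C * t) :
    HasColorings tgt V N := by
  classical
  refine ⟨C, hC, fun t ht => ?_⟩
  -- chosen coloring at each level
  set Fc : ℤ → (Fin (N+1) → Set (Set α)) := fun j =>
    if h : Active t j then (hcol (σ t j) (hσ t ht j h)).choose else (fun _ => ∅)
    with hFc
  have hFc_spec : ∀ j, Active t j → IsColoring δ V N c (σ t j) (Fc j) := by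
    intro j hj
    rw [hFc]; simp only [dif_pos hj]
    exact (hcol (σ t j) (hσ t ht j hj)).choose_spec
  set Blob : Set α := {x ∈ V | ¬ Active t (ℓ x)} with hBlob
  set G : Fin (N+1) → Set (Set α) := fun k =>
    {M | ∃ j : ℤ, Active t j ∧ M ∈ Fc j k ∧ ∃ x ∈ M, ℓ x = j} ∪
    {M | k = 0 ∧ M = Blob} with hG
  -- all points of a selected member have level j
  have hlevconst : ∀ (k : Fin (N+1)) (j : ℤ), Active t j → ∀ M ∈ Fc j k,
      (∃ x ∈ M, ℓ x = j) → ∀ y ∈ M, ℓ y = j := by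
    rintro k j hj M hM ⟨x, hxM, hxj⟩ y hyM
    obtain ⟨hsub, _, hdm, _⟩ := hFc_spec j hj
    have hxV : x ∈ V := hsub k M hM hxM
    have hyV : y ∈ V := hsub k M hM hyM
    have hδ : δ x y ≤ c * σ t j := hdm k M hM x hxM y hyM
    have hst := hstab t ht x hxV y hyV (by rwa [hxj]) (by rwa [hxj])
    rcases hlev x hxV y hyV with h | h | h
    · omega
    · exact absurd (by omega : ℓ x + 2 ≤ ℓ y) hst.1
    · exact absurd (by omega : ℓ y + 2 ≤ ℓ x) hst.2
  refine ⟨G, ?_, ?_, ?_, ?_⟩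
  · -- subsets
    rintro k M (⟨j, hj, hM, _⟩ | ⟨_, rfl⟩)
    · exact (hFc_spec j hj).1 k M hM
    · exact fun x hx => hx.1
  · -- cover
    intro x hx
    by_cases hact : Active t (ℓ x)
    · obtain ⟨k, M, hM, hxM⟩ := (hFc_spec (ℓ x) hact).2.1 x hx
      exact ⟨k, M, Or.inl ⟨ℓ x, hact, hM, x, hxM, rfl⟩, hxM⟩
    · exact ⟨0, Blob, Or.inr ⟨rfl, rfl⟩, hx, hact⟩
  · -- diameters
    rintro k M (⟨j, hj, hM, hwit⟩ | ⟨_, rfl⟩) x hx y hy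
    · obtain ⟨hsub, _, hdm, _⟩ := hFc_spec j hj
      have hxV : x ∈ V := hsub k M hM hx
      have hyV : y ∈ V := hsub k M hM hy
      have hlx : ℓ x = j := hlevconst k j hj M hM hwit x hx
      have hly : ℓ y = j := hlevconst k j hj M hM hwit y hy
      exact hdiam t ht x hxV y hyV (by omega) (by rwa [hlx])
        (by rw [hlx]; exact hdm k M hM x hx y hy)
    · exact hblob t ht x hx.1 y hy.1 hx.2 hy.2
  · -- separation
    rintro k M hM M' hM' x hx y hy htgt
    by_contra hne
    rcases hM with ⟨j, hj, hMF, hwit⟩ | ⟨_, rfl⟩ <;>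
      rcases hM' with ⟨j', hj', hM'F, hwit'⟩ | ⟨_, hM'B⟩
    · -- two selected members
      obtain ⟨hsub, _, _, hsp⟩ := hFc_spec j hj
      have hxV : x ∈ V := hsub k M hMF hx
      have hyV : y ∈ V := (hFc_spec j' hj').1 k M' hM'F hy
      have hlx : ℓ x = j := hlevconst k j hj M hMF hwit x hx
      have hly : ℓ y = j' := hlevconst k j' hj' M' hM'F hwit' y hy
      by_cases hjj : j = j'
      · subst hjj
        have := hsp k M hMF M' hM'F x hx y hy
        by_cases hδs : δ x y ≤ σ t j
        · exact hne (this hδs)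
        · push_neg at hδs
          have := hsep t ht x hxV y hyV (by omega) (by rwa [hlx]) (by rwa [hlx])
          linarith
      · rcases hlev x hxV y hyV with h | h | h
        · omega
        · have := hcross t ht x hxV y hyV h (by rwa [hly])
          linarith
        · have := hcross t ht y hyV x hxV h (by rwa [hlx])
          rw [htgtsy] at this
          linarith
    · -- selected vs blob
      subst hM'B
      have hyV : y ∈ V := hy.1
      have hyna : ¬ Active t (ℓ y) := hy.2
      have hxV : x ∈ V := (hFc_spec j hj).1 k M hMF hx
      have hlx : ℓ x = j := hlevconst k j hj M hMF hwit x hx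
      rcases hlev x hxV y hyV with h | h | h
      · exact hyna (by rwa [← h, hlx])
      · exact hyna (hmono t j (ℓ y) hj (by omega))
      · have := hcross t ht y hyV x hxV h (by rwa [hlx])
        rw [htgtsy] at this
        linarith
    · -- blob vs selected
      have hxV : x ∈ V := hx.1
      have hxna : ¬ Active t (ℓ x) := hx.2
      have hyV : y ∈ V := (hFc_spec j' hj').1 k M' hM'F hy
      have hly : ℓ y = j' := hlevconst k j' hj' M' hM'F hwit' y hy
      rcases hlev x hxV y hyV with h | h | h
      · exact hxna (by rwa [h, hly])
      · have := hcross t ht x hxV y hyV h (by rwa [hly])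
        linarith
      · exact hxna (hmono t j' (ℓ x) hj' (by omega))
    · exact hne hM'B.symm


noncomputable def gsum (n : ℕ) (z w : ℂ) : ℂ := ∑ i ∈ Finset.range n, z ^ i * w ^ (n - 1 - i)

lemma dist_pow_eq (n : ℕ) (z w : ℂ) :
    dist (z ^ n) (w ^ n) = ‖gsum n z w‖ * dist z w := by
  rw [Complex.dist_eq, Complex.dist_eq, ← geom_sum₂_mul z w n, norm_mul, gsum]

lemma key_upper (n : ℕ) (z w : ℂ) :
    dist (z ^ n) (w ^ n) ≤
      (n : ℝ) * ((max (‖z‖) (‖w‖)) ^ (n - 1) * dist z w) := by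
  rw [dist_pow_eq]
  set m := max (‖z‖) (‖w‖) with hm
  have hm0 : 0 ≤ m := le_trans (norm_nonneg z) (le_max_left _ _)
  have habs : ‖gsum n z w‖ ≤ (n : ℝ) * m ^ (n - 1) := by
    rw [gsum]
    refine le_trans (norm_sum_le _ _) ?_
    have hterm : ∀ i ∈ Finset.range n,
        ‖z ^ i * w ^ (n - 1 - i)‖ ≤ m ^ (n - 1) := by
      intro i hi
      rw [Finset.mem_range] at hi
      rw [norm_mul, norm_pow, norm_pow]
      have h1 : ‖z‖ ^ i ≤ m ^ i := pow_le_pow_left₀ (norm_nonneg z) (le_max_left _ _) i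
      have h2 : ‖w‖ ^ (n - 1 - i) ≤ m ^ (n - 1 - i) :=
        pow_le_pow_left₀ (norm_nonneg w) (le_max_right _ _) _
      calc ‖z‖ ^ i * ‖w‖ ^ (n - 1 - i) ≤ m ^ i * m ^ (n - 1 - i) := by
            apply mul_le_mul h1 h2 (pow_nonneg (norm_nonneg w) _) (pow_nonneg hm0 _)
        _ = m ^ (i + (n - 1 - i)) := (pow_add m i _).symm
        _ = m ^ (n - 1) := by congr 1; omega
    refine le_trans (Finset.sum_le_sum hterm) ?_
    rw [Finset.sum_const, Finset.card_range, nsmul_eq_mul]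
  have hd : 0 ≤ dist z w := dist_nonneg
  calc ‖gsum n z w‖ * dist z w ≤ ((n:ℝ) * m ^ (n-1)) * dist z w :=
        mul_le_mul_of_nonneg_right habs hd
    _ = (n : ℝ) * (m ^ (n-1) * dist z w) := by ring

lemma key_lower_aux (n : ℕ) (hn : 1 ≤ n) (z w : ℂ)
    (hw : ‖w‖ ≤ ‖z‖)
    (harg : |z.arg - w.arg| ≤ π / n) :
    Real.cos (((n:ℝ) - 1) * π / (2 * n)) * (‖z‖) ^ (n - 1) ≤
      ‖gsum n z w‖ := by
  by_cases hz : z = 0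
  · subst hz
    have hw0 : ‖w‖ = 0 := le_antisymm (by simpa using hw) (norm_nonneg w)
    have hw' : w = 0 := by simpa using hw0
    subst hw'
    rcases eq_or_lt_of_le hn with h1 | h2
    · -- n = 1
      have hone : n = 1 := h1.symm
      subst hone
      simp [gsum]
    · -- n ≥ 2 : RHS may be 0, LHS is 0
      have : (‖(0:ℂ)‖) ^ (n-1) = 0 := by
        rw [norm_zero]; exact zero_pow (by omega)
      rw [this, mul_zero]
      exact norm_nonneg _
  -- main case
  have hp : 0 < ‖z‖ := norm_pos_iff.mpr hz
  set p := ‖z‖ with hp_def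
  set q := ‖w‖ with hq_def
  set a := z.arg with ha_def
  set b := w.arg with hb_def
  set e := n - 1 with he_def
  have hen : (e : ℝ) = (n : ℝ) - 1 := by
    rw [he_def]; push_cast [Nat.cast_sub hn]; ring
  set φ := (e : ℝ) * (a + b) / 2 with hφ_def
  set ψ : ℕ → ℝ := fun i => (i : ℝ) * a + ((n - 1 - i : ℕ) : ℝ) * b - φ with hψ_def
  have hψ_eq : ∀ i ∈ Finset.range n, ψ i = ((i : ℝ) - (e:ℝ)/2) * (a - b) := by
    intro i hi
    rw [Finset.mem_range] at hi
    have hie : i ≤ e := by omega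
    have hcast : ((n - 1 - i : ℕ) : ℝ) = (e : ℝ) - i := by
      rw [he_def]
      rw [Nat.cast_sub (show i ≤ n - 1 by omega), Nat.cast_sub hn]
    rw [hψ_def]
    simp only []
    rw [hcast, hφ_def]
    ring
  have hterm : ∀ i ∈ Finset.range n,
      Complex.exp ((-φ : ℝ) * Complex.I) * (z ^ i * w ^ (n - 1 - i)) =
        ((p ^ i * q ^ (n - 1 - i) : ℝ) : ℂ) * Complex.exp ((ψ i : ℝ) * Complex.I) := by
    intro i hi
    have hcomb : Complex.exp ((-φ : ℝ) * Complex.I) *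
        Complex.exp ((i : ℂ) * ((z.arg : ℂ) * Complex.I)) *
        Complex.exp (((n - 1 - i : ℕ) : ℂ) * ((w.arg : ℂ) * Complex.I)) =
        Complex.exp ((ψ i : ℝ) * Complex.I) := by
      rw [← Complex.exp_add, ← Complex.exp_add]
      congr 1
      rw [hψ_def]
      push_cast
      ring
    conv_lhs => rw [← Complex.norm_mul_exp_arg_mul_I z, ← Complex.norm_mul_exp_arg_mul_I w]
    rw [mul_pow, mul_pow, ← Complex.exp_nat_mul, ← Complex.exp_nat_mul, ← hcomb]
    push_cast
    ring
  -- real part computation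
  have hre : (Complex.exp ((-φ : ℝ) * Complex.I) * gsum n z w).re =
      ∑ i ∈ Finset.range n, p ^ i * q ^ (n - 1 - i) * Real.cos (ψ i) := by
    rw [gsum, Finset.mul_sum, Complex.re_sum]
    refine Finset.sum_congr rfl ?_
    intro i hi
    rw [hterm i hi]
    rw [Complex.mul_re]
    rw [Complex.exp_ofReal_mul_I_re]
    have him : ((p ^ i * q ^ (n - 1 - i) : ℝ) : ℂ).im = 0 :=
      Complex.ofReal_im _
    have hrr : ((p ^ i * q ^ (n - 1 - i) : ℝ) : ℂ).re = p ^ i * q ^ (n - 1 - i) :=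
      Complex.ofReal_re _
    rw [him, hrr]
    ring
  -- each cosine is nonneg
  have hδ : |a - b| ≤ π / n := harg
  have hn0 : (0:ℝ) < n := by exact_mod_cast hn
  have hcosnn : ∀ i ∈ Finset.range n, 0 ≤ Real.cos (ψ i) := by
    intro i hi
    have hie : (i:ℝ) ≤ (e:ℝ) := by
      rw [Finset.mem_range] at hi
      have : i ≤ e := by omega
      exact_mod_cast this
    have hi0 : (0:ℝ) ≤ i := Nat.cast_nonneg i
    have habs : |ψ i| ≤ π / 2 := by
      rw [hψ_eq i hi, abs_mul]
      have h1 : |(i:ℝ) - (e:ℝ)/2| ≤ (e:ℝ)/2 := by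
        rw [abs_le]; constructor <;> nlinarith
      have h2 : (e:ℝ)/2 * (π/n) ≤ π/2 := by
        rw [hen]
        have hπn : (π/(n:ℝ)) * (n:ℝ) = π := div_mul_cancel₀ _ (ne_of_gt hn0)
        nlinarith [div_nonneg Real.pi_pos.le hn0.le]
      calc |(i:ℝ) - (e:ℝ)/2| * |a - b| ≤ ((e:ℝ)/2) * (π/n) := by
            apply mul_le_mul h1 hδ (abs_nonneg _) (by positivity)
        _ ≤ π/2 := h2
    apply Real.cos_nonneg_of_mem_Icc
    rw [Set.mem_Icc]
    rw [abs_le] at habs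
    constructor <;> linarith
  -- the top term
  have hemem : e ∈ Finset.range n := by rw [Finset.mem_range]; omega
  have htop : Real.cos (((n:ℝ) - 1) * π / (2*n)) * p ^ e ≤
      p ^ e * q ^ (n - 1 - e) * Real.cos (ψ e) := by
    have hq0 : n - 1 - e = 0 := by omega
    rw [hq0, pow_zero, mul_one]
    have hψe : ψ e = ((e:ℝ)/2) * (a - b) := by
      rw [hψ_eq e hemem]; ring
    have hcos : Real.cos (((n:ℝ)-1) * π / (2*n)) ≤ Real.cos (ψ e) := by
      rw [← Real.cos_abs (ψ e)]
      apply Real.cos_le_cos_of_nonneg_of_le_pi (abs_nonneg _)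
      · -- ((n-1)*π/(2n)) ≤ π
        rw [div_le_iff₀ (by positivity)]
        nlinarith [Real.pi_pos]
      · rw [hψe, abs_mul]
        have h1 : |(e:ℝ)/2| = (e:ℝ)/2 := abs_of_nonneg (by positivity)
        rw [h1, hen]
        calc ((n:ℝ)-1)/2 * |a - b| ≤ ((n:ℝ)-1)/2 * (π/n) := by
              apply mul_le_mul_of_nonneg_left hδ
              have : (1:ℝ) ≤ n := by exact_mod_cast hn
              linarith
          _ = ((n:ℝ)-1) * π / (2*n) := by ring
    calc Real.cos (((n:ℝ)-1) * π / (2*n)) * p ^ e ≤ Real.cos (ψ e) * p ^ e :=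
          mul_le_mul_of_nonneg_right hcos (pow_nonneg hp.le e)
      _ = p ^ e * Real.cos (ψ e) := by ring
  -- sum ≥ top term
  have hsum : p ^ e * q ^ (n - 1 - e) * Real.cos (ψ e) ≤
      ∑ i ∈ Finset.range n, p ^ i * q ^ (n - 1 - i) * Real.cos (ψ i) := by
    apply Finset.single_le_sum (f := fun i => p ^ i * q ^ (n - 1 - i) * Real.cos (ψ i))
    · intro i hi
      have hq0 : 0 ≤ q := norm_nonneg w
      have := hcosnn i hi
      positivity
    · exact hemem
  -- conclude
  have hre_le : (Complex.exp ((-φ : ℝ) * Complex.I) * gsum n z w).re ≤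
      ‖gsum n z w‖ := by
    calc (Complex.exp ((-φ : ℝ) * Complex.I) * gsum n z w).re
        ≤ ‖Complex.exp ((-φ : ℝ) * Complex.I) * gsum n z w‖ :=
          Complex.re_le_norm _
      _ = ‖gsum n z w‖ := by
          rw [norm_mul, Complex.norm_exp_ofReal_mul_I, one_mul]
  calc Real.cos (((n:ℝ) - 1) * π / (2 * n)) * p ^ (n-1)
      = Real.cos (((n:ℝ) - 1) * π / (2 * n)) * p ^ e := by rw [he_def]
    _ ≤ p ^ e * q ^ (n - 1 - e) * Real.cos (ψ e) := htop
    _ ≤ ∑ i ∈ Finset.range n, p ^ i * q ^ (n - 1 - i) * Real.cos (ψ i) := hsum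
    _ = (Complex.exp ((-φ : ℝ) * Complex.I) * gsum n z w).re := hre.symm
    _ ≤ ‖gsum n z w‖ := hre_le

lemma key_lower (n : ℕ) (hn : 1 ≤ n) (z w : ℂ)
    (harg : |z.arg - w.arg| ≤ π / n) :
    Real.cos (((n:ℝ) - 1) * π / (2 * n)) *
      ((max (‖z‖) (‖w‖)) ^ (n - 1) * dist z w) ≤
      dist (z ^ n) (w ^ n) := by
  rcases le_total (‖w‖) (‖z‖) with h | h
  · rw [dist_pow_eq, max_eq_left h]
    have := key_lower_aux n hn z w h harg
    have hd : 0 ≤ dist z w := dist_nonneg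
    calc Real.cos (((n:ℝ) - 1) * π / (2*n)) * ((‖z‖) ^ (n-1) * dist z w)
        = (Real.cos (((n:ℝ) - 1) * π / (2*n)) * (‖z‖) ^ (n-1)) * dist z w := by ring
      _ ≤ ‖gsum n z w‖ * dist z w := mul_le_mul_of_nonneg_right this hd
  · rw [dist_comm z w, dist_comm (z^n) (w^n), dist_pow_eq, max_eq_right h]
    have harg' : |w.arg - z.arg| ≤ π / n := by rwa [abs_sub_comm]
    have := key_lower_aux n hn w z h harg'
    have hd : 0 ≤ dist w z := dist_nonneg
    calc Real.cos (((n:ℝ) - 1) * π / (2*n)) * ((‖w‖) ^ (n-1) * dist w z)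
        = (Real.cos (((n:ℝ) - 1) * π / (2*n)) * (‖w‖) ^ (n-1)) * dist w z := by ring
      _ ≤ ‖gsum n w z‖ * dist w z := mul_le_mul_of_nonneg_right this hd

lemma cos_pos_of_n (n : ℕ) (hn : 1 ≤ n) :
    0 < Real.cos (((n:ℝ) - 1) * π / (2 * n)) := by
  have hn0 : (0:ℝ) < n := by exact_mod_cast hn
  have h1 : (1:ℝ) ≤ n := by exact_mod_cast hn
  apply Real.cos_pos_of_mem_Ioo
  constructor
  · have hnn : 0 ≤ ((n:ℝ) - 1) * π / (2*n) :=
      div_nonneg (mul_nonneg (by linarith) Real.pi_pos.le) (by linarith)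
    nlinarith [Real.pi_pos]
  · rw [div_lt_iff₀ (by positivity)]
    nlinarith [Real.pi_pos]


noncomputable def W (j : ℤ) : ℝ := (32 : ℝ) ^ j

lemma W_pos (j : ℤ) : 0 < W j := zpow_pos (by norm_num) j

lemma W_mono {j j' : ℤ} (h : j ≤ j') : W j ≤ W j' :=
  zpow_le_zpow_right₀ (by norm_num) h

lemma W_succ (j : ℤ) : W (j + 1) = 32 * W j := by
  rw [W, W, zpow_add_one₀ (by norm_num : (32:ℝ) ≠ 0)]
  ring

noncomputable def lev (z : ℂ) : ℤ := Int.log 32 (‖z‖)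

lemma lev_spec {z : ℂ} (hz : z ≠ 0) :
    W (lev z) ≤ ‖z‖ ∧ ‖z‖ < 32 * W (lev z) := by
  have h0 : 0 < ‖z‖ := norm_pos_iff.mpr hz
  constructor
  · exact Int.zpow_log_le_self (by norm_num) h0
  · have := Int.lt_zpow_succ_log_self (by norm_num : 1 < 32) (‖z‖)
    calc ‖z‖ < ((32:ℕ):ℝ) ^ (Int.log 32 (‖z‖) + 1) := this
      _ = W (lev z + 1) := by rw [W, lev]; norm_num
      _ = 32 * W (lev z) := W_succ _

lemma abs_sub_abs_le (x y : ℂ) : |‖x‖ - ‖y‖| ≤ dist x y := by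
  rw [Complex.dist_eq]
  exact abs_norm_sub_norm_le x y

lemma dist_le_abs_add (x y : ℂ) : dist x y ≤ ‖x‖ + ‖y‖ := by
  calc dist x y ≤ dist x 0 + dist 0 y := dist_triangle _ _ _
    _ = ‖x‖ + ‖y‖ := by
        rw [Complex.dist_eq, Complex.dist_eq]
        simp

/-- contradiction gadget: close radii force close levels -/
lemma lev_gap {x y : ℂ} (hx : x ≠ 0) (hy : y ≠ 0)
    (hsp : |‖x‖ - ‖y‖| < W (lev x) / 2) :
    ¬(lev x + 2 ≤ lev y) ∧ ¬(lev y + 2 ≤ lev x) := by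
  obtain ⟨hx1, hx2⟩ := lev_spec hx
  obtain ⟨hy1, hy2⟩ := lev_spec hy
  rw [abs_lt] at hsp
  constructor
  · intro h
    have h1 : W (lev x + 2) ≤ W (lev y) := W_mono h
    have h2 : W (lev x + 2) = 32 * (32 * W (lev x)) := by
      rw [show lev x + 2 = (lev x + 1) + 1 by ring, W_succ, W_succ]
    have := W_pos (lev x)
    linarith
  · intro h
    have h1 : W (lev y + 2) ≤ W (lev x) := W_mono h
    have h2 : W (lev y + 2) = 32 * (32 * W (lev y)) := by
      rw [show lev y + 2 = (lev y + 1) + 1 by ring, W_succ, W_succ]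
    have hwx := W_pos (lev x)
    have hwy := W_pos (lev y)
    linarith

/-- the sectors of width π/n cover ℂ -/
lemma sector_cover (n : ℕ) (hn : 1 ≤ n) (z : ℂ) :
    ∃ l : ℕ, l < 2 * n ∧
      -π + l * (π / n) ≤ z.arg ∧ z.arg ≤ -π + (l + 1) * (π / n) := by
  have hπ := Real.pi_pos
  have hn0 : (0:ℝ) < n := by exact_mod_cast hn
  set θ := z.arg with hθ
  have h1 : -π < θ := Complex.neg_pi_lt_arg z
  have h2 : θ ≤ π := Complex.arg_le_pi z
  set u := (θ + π) * n / π with hu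
  have hu0 : 0 < u := by
    rw [hu]
    have : 0 < θ + π := by linarith
    positivity
  have hu2n : u ≤ 2 * n := by
    rw [hu, div_le_iff₀ hπ]
    nlinarith
  set m := ⌈u⌉₊ with hm
  have hm1 : 1 ≤ m := by
    rw [hm]
    exact Nat.one_le_iff_ne_zero.mpr (by
      intro h
      have := Nat.ceil_eq_zero.mp h
      linarith)
  refine ⟨m - 1, ?_, ?_, ?_⟩
  · have hceil : m ≤ 2 * n := by
      rw [hm]
      apply Nat.ceil_le.mpr
      calc u ≤ 2 * (n:ℝ) := hu2n
        _ = ((2 * n : ℕ) : ℝ) := by push_cast; ring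
    omega
  · have hcast : ((m - 1 : ℕ) : ℝ) = (m : ℝ) - 1 := by
      push_cast [Nat.cast_sub hm1]; ring
    have hlu : ((m - 1 : ℕ) : ℝ) ≤ u := by
      rw [hcast]
      have := Nat.ceil_lt_add_one hu0.le
      rw [← hm] at this
      linarith
    have hkey : u * (π/n) = θ + π := by
      rw [hu]; field_simp
    have := mul_le_mul_of_nonneg_right hlu (by positivity : (0:ℝ) ≤ π/n)
    rw [hkey] at this
    linarith
  · have hum : u ≤ (m : ℝ) := Nat.le_ceil u
    have hcast : ((m - 1 : ℕ) : ℝ) + 1 = (m : ℝ) := by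
      push_cast [Nat.cast_sub hm1]; ring
    have hkey : u * (π/n) = θ + π := by
      rw [hu]; field_simp
    have := mul_le_mul_of_nonneg_right hum (by positivity : (0:ℝ) ≤ π/n)
    rw [hkey, hcast] at *
    linarith


/-- Transfer: euclidean colorings to `ρ`-colorings on a piece `V`. -/
lemma E1 (V : Set ℂ) (ρ : ℂ → ℂ → ℝ) (e : ℕ) (a A c : ℝ) (N : ℕ)
    (ha : 0 < a) (hA : 0 < A) (hc : 1 ≤ c)
    (hρsy : ∀ x y, ρ x y = ρ y x)
    (hlow : ∀ x ∈ V, ∀ y ∈ V,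
      a * ((max (‖x‖) (‖y‖)) ^ e * dist x y) ≤ ρ x y)
    (hup : ∀ x ∈ V, ∀ y ∈ V,
      ρ x y ≤ A * ((max (‖x‖) (‖y‖)) ^ e * dist x y))
    (hV0 : ∀ z ∈ V, z ≠ 0)
    (hVlev : ∀ x ∈ V, ∀ y ∈ V, lev x = lev y ∨ lev x + 2 ≤ lev y ∨ lev y + 2 ≤ lev x)
    (hcol : ∀ s : ℝ, 0 < s → ∃ F, IsColoring dist V N c s F) :
    HasColorings ρ V N := by
  have hc0 : (0:ℝ) < c := lt_of_lt_of_le one_pos hc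
  set C : ℝ := 4*A*c*32^(e+1)/a + A*c*32^e/a with hC_def
  have hC : 0 < C := by rw [hC_def]; positivity
  apply transfer_colorings V dist ρ lev N c C
    (fun t j => 2*c*t < a * ((W j)^e * W j)) (fun t j => t / (a * (W j)^e))
    hρsy hc0 hC hcol hVlev
  · -- hσ
    intro t ht j _
    have := W_pos j
    positivity
  · -- hmono
    intro t j j' hact hjj
    refine lt_of_lt_of_le hact ?_
    have h1 := W_pos j
    have h2 := W_mono hjj
    have h3 : (W j)^e ≤ (W j')^e := pow_le_pow_left₀ h1.le h2 e
    have h4 : 0 < (W j')^e := pow_pos (W_pos j') e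
    apply mul_le_mul_of_nonneg_left _ ha.le
    exact mul_le_mul h3 h2 h1.le h4.le
  · -- hstab
    intro t ht x hxV y hyV hact hδ
    have hx0 := hV0 x hxV
    have hy0 := hV0 y hyV
    have hWp := W_pos (lev x)
    have hWe : (0:ℝ) < (W (lev x))^e := pow_pos hWp e
    have hσlt : c * (t / (a * (W (lev x))^e)) < W (lev x) / 2 := by
      rw [mul_div_assoc', div_lt_div_iff₀ (by positivity) (by norm_num)]
      nlinarith
    apply lev_gap hx0 hy0
    calc |‖x‖ - ‖y‖| ≤ dist x y := abs_sub_abs_le x y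
      _ ≤ c * (t / (a * (W (lev x))^e)) := hδ
      _ < W (lev x) / 2 := hσlt
  · -- hsep
    intro t ht x hxV y hyV hll hact hσδ
    have hx0 := hV0 x hxV
    obtain ⟨hx1, _⟩ := lev_spec hx0
    have hWp := W_pos (lev x)
    have hWe : (0:ℝ) < (W (lev x))^e := pow_pos hWp e
    have hm : W (lev x) ≤ max (‖x‖) (‖y‖) :=
      le_trans hx1 (le_max_left _ _)
    have hme : (W (lev x))^e ≤ (max (‖x‖) (‖y‖))^e :=
      pow_le_pow_left₀ hWp.le hm e
    have hd0 : 0 < dist x y := lt_of_le_of_lt (by positivity) hσδ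
    calc t = a * ((W (lev x))^e * (t / (a * (W (lev x))^e))) := by
          field_simp
      _ < a * ((W (lev x))^e * dist x y) := by
          apply mul_lt_mul_of_pos_left _ ha
          exact mul_lt_mul_of_pos_left hσδ hWe
      _ ≤ a * ((max (‖x‖) (‖y‖))^e * dist x y) := by
          apply mul_le_mul_of_nonneg_left _ ha.le
          exact mul_le_mul_of_nonneg_right hme dist_nonneg
      _ ≤ ρ x y := hlow x hxV y hyV
  · -- hcross
    intro t ht x hxV y hyV hxy hact
    have hx0 := hV0 x hxV
    have hy0 := hV0 y hyV
    obtain ⟨hx1, hx2⟩ := lev_spec hx0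
    obtain ⟨hy1, hy2⟩ := lev_spec hy0
    have hWx := W_pos (lev x)
    have hWy := W_pos (lev y)
    have hx32 : 32 * W (lev x) ≤ W (lev y) / 32 := by
      have h1 : W (lev x + 2) ≤ W (lev y) := W_mono hxy
      have h2 : W (lev x + 2) = 32 * (32 * W (lev x)) := by
        rw [show lev x + 2 = (lev x + 1) + 1 by ring, W_succ, W_succ]
      linarith
    have hdist : W (lev y) / 2 ≤ dist x y := by
      have h1 : ‖y‖ - ‖x‖ ≤ |‖x‖ - ‖y‖| := by
        rw [abs_sub_comm]; exact le_abs_self _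
      have h2 := abs_sub_abs_le x y
      linarith
    have hm : W (lev y) ≤ max (‖x‖) (‖y‖) :=
      le_trans hy1 (le_max_right _ _)
    have hme : (W (lev y))^e ≤ (max (‖x‖) (‖y‖))^e :=
      pow_le_pow_left₀ hWy.le hm e
    have hchain : a * ((W (lev y))^e * (W (lev y) / 2)) ≤ ρ x y := by
      refine le_trans ?_ (hlow x hxV y hyV)
      apply mul_le_mul_of_nonneg_left _ ha.le
      apply mul_le_mul hme hdist (by positivity) (by positivity)
    have hWe : (0:ℝ) < (W (lev y))^e := pow_pos hWy e
    -- Active at lev y : 2*c*t < a * ((W (lev y))^e * W (lev y))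
    have ht' : t ≤ c * t := by nlinarith
    nlinarith
  · -- hdiam
    intro t ht x hxV y hyV hll hact hδ
    have hx0 := hV0 x hxV
    have hy0 := hV0 y hyV
    obtain ⟨hx1, hx2⟩ := lev_spec hx0
    obtain ⟨hy1, hy2⟩ := lev_spec hy0
    have hWp := W_pos (lev x)
    have hWe : (0:ℝ) < (W (lev x))^e := pow_pos hWp e
    have hm : max (‖x‖) (‖y‖) ≤ 32 * W (lev x) := by
      apply max_le hx2.le
      rw [hll]
      exact hy2.le
    have hmnn : (0:ℝ) ≤ max (‖x‖) (‖y‖) :=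
      le_trans (norm_nonneg x) (le_max_left _ _)
    have hme : (max (‖x‖) (‖y‖))^e ≤ (32 * W (lev x))^e :=
      pow_le_pow_left₀ hmnn hm e
    have hstep : ρ x y ≤ A * ((32 * W (lev x))^e * (c * (t / (a * (W (lev x))^e)))) := by
      refine le_trans (hup x hxV y hyV) ?_
      apply mul_le_mul_of_nonneg_left _ hA.le
      apply mul_le_mul hme hδ dist_nonneg (by positivity)
    have heq : A * ((32 * W (lev x))^e * (c * (t / (a * (W (lev x))^e)))) =
        (A*c*32^e/a) * t := by
      rw [mul_pow]
      field_simp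
    rw [heq] at hstep
    refine le_trans hstep ?_
    rw [hC_def]
    have h32 : (0:ℝ) < (32:ℝ)^(e+1) := by positivity
    have : 0 ≤ (4*A*c*32^(e+1)/a) * t := by positivity
    nlinarith
  · -- hblob
    intro t ht x hxV y hyV hnx hny
    push_neg at hnx hny
    have hx0 := hV0 x hxV
    have hy0 := hV0 y hyV
    obtain ⟨hx1, hx2⟩ := lev_spec hx0
    obtain ⟨hy1, hy2⟩ := lev_spec hy0
    have hWx := W_pos (lev x)
    have hWy := W_pos (lev y)
    set m := max (‖x‖) (‖y‖) with hm_def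
    have hmnn : (0:ℝ) ≤ m := le_trans (norm_nonneg x) (le_max_left _ _)
    have hbx : (‖x‖)^(e+1) ≤ 32^(e+1) * (2*c*t/a) := by
      calc (‖x‖)^(e+1) ≤ (32 * W (lev x))^(e+1) :=
            pow_le_pow_left₀ (norm_nonneg x) hx2.le _
        _ = 32^(e+1) * ((W (lev x))^e * W (lev x)) := by
            rw [mul_pow]; ring
        _ ≤ 32^(e+1) * (2*c*t/a) := by
            apply mul_le_mul_of_nonneg_left _ (by positivity)
            rw [le_div_iff₀ ha]
            nlinarith
    have hby : (‖y‖)^(e+1) ≤ 32^(e+1) * (2*c*t/a) := by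
      calc (‖y‖)^(e+1) ≤ (32 * W (lev y))^(e+1) :=
            pow_le_pow_left₀ (norm_nonneg y) hy2.le _
        _ = 32^(e+1) * ((W (lev y))^e * W (lev y)) := by
            rw [mul_pow]; ring
        _ ≤ 32^(e+1) * (2*c*t/a) := by
            apply mul_le_mul_of_nonneg_left _ (by positivity)
            rw [le_div_iff₀ ha]
            nlinarith
    have hmb : m^(e+1) ≤ 32^(e+1) * (2*c*t/a) := by
      rcases max_cases (‖x‖) (‖y‖) with ⟨hmx, _⟩ | ⟨hmx, _⟩ <;>
        rw [hm_def, hmx]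
      · exact hbx
      · exact hby
    have hdd : dist x y ≤ 2 * m := by
      refine le_trans (dist_le_abs_add x y) ?_
      have h1 : ‖x‖ ≤ m := le_max_left _ _
      have h2 : ‖y‖ ≤ m := le_max_right _ _
      linarith
    have hchain : ρ x y ≤ 2 * A * m^(e+1) := by
      calc ρ x y ≤ A * (m^e * dist x y) := hup x hxV y hyV
        _ ≤ A * (m^e * (2*m)) := by
            apply mul_le_mul_of_nonneg_left _ hA.le
            exact mul_le_mul_of_nonneg_left hdd (by positivity)
        _ = 2 * A * m^(e+1) := by rw [pow_succ]; ring
    refine le_trans hchain ?_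
    calc 2 * A * m^(e+1) ≤ 2 * A * (32^(e+1) * (2*c*t/a)) := by
          apply mul_le_mul_of_nonneg_left hmb (by positivity)
      _ = (4*A*c*32^(e+1)/a) * t := by field_simp; ring
      _ ≤ C * t := by
          rw [hC_def]
          have : 0 ≤ (A*c*32^e/a) * t := by positivity
          nlinarith

/-- Transfer: `ρ`-colorings to euclidean colorings on a piece `V`. -/
lemma E2 (V : Set ℂ) (ρ : ℂ → ℂ → ℝ) (e : ℕ) (a A c : ℝ) (N : ℕ)
    (ha : 0 < a) (hA : 0 < A) (hc : 1 ≤ c)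
    (hlow : ∀ x ∈ V, ∀ y ∈ V,
      a * ((max (‖x‖) (‖y‖)) ^ e * dist x y) ≤ ρ x y)
    (hup : ∀ x ∈ V, ∀ y ∈ V,
      ρ x y ≤ A * ((max (‖x‖) (‖y‖)) ^ e * dist x y))
    (hV0 : ∀ z ∈ V, z ≠ 0)
    (hVlev : ∀ x ∈ V, ∀ y ∈ V, lev x = lev y ∨ lev x + 2 ≤ lev y ∨ lev y + 2 ≤ lev x)
    (hcol : ∀ s : ℝ, 0 < s → ∃ F, IsColoring ρ V N c s F) :
    HasColorings dist V N := by
  have hc0 : (0:ℝ) < c := lt_of_lt_of_le one_pos hc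
  set γ : ℝ := c*A*32^e/a with hγ_def
  have hγ : 0 < γ := by rw [hγ_def]; positivity
  set C : ℝ := 128*(γ+1) + γ + 1 with hC_def
  have hC : 0 < C := by rw [hC_def]; positivity
  apply transfer_colorings V ρ dist lev N c C
    (fun s j => 2*(γ+1)*s < W j) (fun s j => A * ((32 * W j)^e) * s)
    (fun x y => dist_comm x y) hc0 hC hcol hVlev
  · -- hσ
    intro s hs j _
    have := W_pos j
    positivity
  · -- hmono
    intro s j j' hact hjj
    exact lt_of_lt_of_le hact (W_mono hjj)
  · -- hstab
    intro s hs x hxV y hyV hact hρ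
    have hx0 := hV0 x hxV
    have hy0 := hV0 y hyV
    obtain ⟨hx1, hx2⟩ := lev_spec hx0
    have hWp := W_pos (lev x)
    have hWe : (0:ℝ) < (W (lev x))^e := pow_pos hWp e
    -- dist x y ≤ γ * s
    have hm : W (lev x) ≤ max (‖x‖) (‖y‖) :=
      le_trans hx1 (le_max_left _ _)
    have hme : (W (lev x))^e ≤ (max (‖x‖) (‖y‖))^e :=
      pow_le_pow_left₀ hWp.le hm e
    have hdist : dist x y ≤ γ * s := by
      have h1 : a * ((W (lev x))^e * dist x y) ≤
          a * ((max (‖x‖) (‖y‖))^e * dist x y) := by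
        apply mul_le_mul_of_nonneg_left _ ha.le
        exact mul_le_mul_of_nonneg_right hme dist_nonneg
      have h2 : a * ((W (lev x))^e * dist x y) ≤ c * (A * ((32 * W (lev x))^e) * s) :=
        le_trans h1 (le_trans (hlow x hxV y hyV) hρ)
      have h3 : c * (A * ((32 * W (lev x))^e) * s) = (γ * s) * (a * (W (lev x))^e) := by
        rw [mul_pow, hγ_def]
        field_simp
      rw [h3] at h2
      have h4 : a * ((W (lev x))^e * dist x y) = dist x y * (a * (W (lev x))^e) := by ring
      rw [h4] at h2
      exact le_of_mul_le_mul_right h2 (by positivity)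
    apply lev_gap hx0 hy0
    calc |‖x‖ - ‖y‖| ≤ dist x y := abs_sub_abs_le x y
      _ ≤ γ * s := hdist
      _ < W (lev x) / 2 := by nlinarith
  · -- hsep
    intro s hs x hxV y hyV hll hact hσρ
    have hx0 := hV0 x hxV
    have hy0 := hV0 y hyV
    obtain ⟨hx1, hx2⟩ := lev_spec hx0
    obtain ⟨hy1, hy2⟩ := lev_spec hy0
    have hWp := W_pos (lev x)
    have hm : max (‖x‖) (‖y‖) ≤ 32 * W (lev x) := by
      apply max_le hx2.le
      rw [hll]
      exact hy2.le
    have hmnn : (0:ℝ) ≤ max (‖x‖) (‖y‖) :=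
      le_trans (norm_nonneg x) (le_max_left _ _)
    have hme : (max (‖x‖) (‖y‖))^e ≤ (32 * W (lev x))^e :=
      pow_le_pow_left₀ hmnn hm e
    have h1 : A * ((32 * W (lev x))^e) * s < ρ x y := hσρ
    have h2 : ρ x y ≤ A * ((max (‖x‖) (‖y‖))^e * dist x y) :=
      hup x hxV y hyV
    have h3 : A * ((max (‖x‖) (‖y‖))^e * dist x y) ≤
        A * ((32 * W (lev x))^e * dist x y) := by
      apply mul_le_mul_of_nonneg_left _ hA.le
      exact mul_le_mul_of_nonneg_right hme dist_nonneg
    have hWe32 : (0:ℝ) < (32 * W (lev x))^e := by positivity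
    have h4 : (A * (32 * W (lev x))^e) * s < (A * (32 * W (lev x))^e) * dist x y := by
      calc (A * (32 * W (lev x))^e) * s = A * ((32 * W (lev x))^e) * s := by ring
        _ < ρ x y := h1
        _ ≤ A * ((32 * W (lev x))^e * dist x y) := le_trans h2 h3
        _ = (A * (32 * W (lev x))^e) * dist x y := by ring
    exact lt_of_mul_lt_mul_left h4 (by positivity)
  · -- hcross
    intro s hs x hxV y hyV hxy hact
    have hx0 := hV0 x hxV
    have hy0 := hV0 y hyV
    obtain ⟨hx1, hx2⟩ := lev_spec hx0
    obtain ⟨hy1, hy2⟩ := lev_spec hy0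
    have hWx := W_pos (lev x)
    have hWy := W_pos (lev y)
    have hx32 : 32 * W (lev x) ≤ W (lev y) / 32 := by
      have h1 : W (lev x + 2) ≤ W (lev y) := W_mono hxy
      have h2 : W (lev x + 2) = 32 * (32 * W (lev x)) := by
        rw [show lev x + 2 = (lev x + 1) + 1 by ring, W_succ, W_succ]
      linarith
    have hdist : W (lev y) / 2 ≤ dist x y := by
      have h1 : ‖y‖ - ‖x‖ ≤ |‖x‖ - ‖y‖| := by
        rw [abs_sub_comm]; exact le_abs_self _
      have h2 := abs_sub_abs_le x y
      linarith
    -- Active at lev y : 2*(γ+1)*s < W (lev y)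
    nlinarith
  · -- hdiam
    intro s hs x hxV y hyV hll hact hρ
    have hx0 := hV0 x hxV
    have hy0 := hV0 y hyV
    obtain ⟨hx1, hx2⟩ := lev_spec hx0
    have hWp := W_pos (lev x)
    have hWe : (0:ℝ) < (W (lev x))^e := pow_pos hWp e
    have hm : W (lev x) ≤ max (‖x‖) (‖y‖) :=
      le_trans hx1 (le_max_left _ _)
    have hme : (W (lev x))^e ≤ (max (‖x‖) (‖y‖))^e :=
      pow_le_pow_left₀ hWp.le hm e
    have hdist : dist x y ≤ γ * s := by
      have h1 : a * ((W (lev x))^e * dist x y) ≤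
          a * ((max (‖x‖) (‖y‖))^e * dist x y) := by
        apply mul_le_mul_of_nonneg_left _ ha.le
        exact mul_le_mul_of_nonneg_right hme dist_nonneg
      have h2 : a * ((W (lev x))^e * dist x y) ≤ c * (A * ((32 * W (lev x))^e) * s) :=
        le_trans h1 (le_trans (hlow x hxV y hyV) hρ)
      have h3 : c * (A * ((32 * W (lev x))^e) * s) = (γ * s) * (a * (W (lev x))^e) := by
        rw [mul_pow, hγ_def]
        field_simp
      rw [h3] at h2
      have h4 : a * ((W (lev x))^e * dist x y) = dist x y * (a * (W (lev x))^e) := by ring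
      rw [h4] at h2
      exact le_of_mul_le_mul_right h2 (by positivity)
    refine le_trans hdist ?_
    rw [hC_def]
    nlinarith
  · -- hblob
    intro s hs x hxV y hyV hnx hny
    push_neg at hnx hny
    have hx0 := hV0 x hxV
    have hy0 := hV0 y hyV
    obtain ⟨hx1, hx2⟩ := lev_spec hx0
    obtain ⟨hy1, hy2⟩ := lev_spec hy0
    have hbx : ‖x‖ ≤ 64 * (γ+1) * s := by nlinarith
    have hby : ‖y‖ ≤ 64 * (γ+1) * s := by nlinarith
    calc dist x y ≤ ‖x‖ + ‖y‖ := dist_le_abs_add x y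
      _ ≤ 128 * (γ+1) * s := by linarith
      _ ≤ C * s := by rw [hC_def]; nlinarith

lemma IsColoring.restrict {d : ℂ → ℂ → ℝ} {V W : Set ℂ} {N : ℕ} {c s : ℝ}
    {F : Fin (N+1) → Set (Set ℂ)} (h : IsColoring d V N c s F) (hWV : W ⊆ V) :
    IsColoring d W N c s (fun k => (fun M => M ∩ W) '' F k) := by
  obtain ⟨hsub, hcov, hdiam, hsep⟩ := h
  refine ⟨?_, ?_, ?_, ?_⟩
  · rintro k M ⟨M₀, hM₀, rfl⟩; exact Set.inter_subset_right
  · intro x hx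
    obtain ⟨k, M, hM, hxM⟩ := hcov x (hWV hx)
    exact ⟨k, M ∩ W, ⟨M, hM, rfl⟩, hxM, hx⟩
  · rintro k M ⟨M₀, hM₀, rfl⟩ x hx y hy
    exact hdiam k M₀ hM₀ x hx.1 y hy.1
  · rintro k M ⟨M₀, hM₀, rfl⟩ M' ⟨M₀', hM₀', rfl⟩ x hx y hy hd
    rw [hsep k M₀ hM₀ M₀' hM₀' x hx.1 y hy.1 hd]

lemma lev_parity {x y : ℤ} (h : (Even x ∧ Even y) ∨ (¬Even x ∧ ¬Even y)) :
    x = y ∨ x + 2 ≤ y ∨ y + 2 ≤ x := by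
  rcases h with ⟨hx, hy⟩ | ⟨hx, hy⟩ <;>
    rw [Int.even_iff] at hx hy <;> omega

section Assembly

variable (n : ℕ)

/-- membership in the `l`-th sector -/
def InSec (l : ℕ) (z : ℂ) : Prop :=
  -π + (l:ℝ) * (π/(n:ℝ)) ≤ z.arg ∧ z.arg ≤ -π + ((l:ℝ)+1) * (π/(n:ℝ))

lemma sec_arg {l : ℕ} {z w : ℂ} (hz : InSec n l z) (hw : InSec n l w) :
    |z.arg - w.arg| ≤ π/(n:ℝ) := by
  obtain ⟨hz1, hz2⟩ := hz
  obtain ⟨hw1, hw2⟩ := hw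
  rw [abs_le]
  constructor <;> nlinarith

variable (X : Set ℂ)

noncomputable def Pev : Fin (2*n) → Set ℂ := fun l =>
  {z | z ∈ X ∧ z ≠ 0 ∧ InSec n (l:ℕ) z ∧ Even (lev z)}

noncomputable def Pod : Fin (2*n) → Set ℂ := fun l =>
  {z | z ∈ X ∧ z ≠ 0 ∧ InSec n (l:ℕ) z ∧ ¬Even (lev z)}

lemma pieces_cover (hn : 1 ≤ n) :
    X = {z | z ∈ X ∧ z = 0} ∪ ⋃ l : Fin (2*n), (Pev n X l ∪ Pod n X l) := by
  apply Set.Subset.antisymm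
  · intro z hz
    by_cases h0 : z = 0
    · exact Or.inl ⟨hz, h0⟩
    · obtain ⟨l, hl, h1, h2⟩ := sector_cover n hn z
      right
      rw [Set.mem_iUnion]
      refine ⟨⟨l, hl⟩, ?_⟩
      by_cases hev : Even (lev z)
      · exact Or.inl ⟨hz, h0, ⟨by exact_mod_cast h1, by exact_mod_cast h2⟩, hev⟩
      · exact Or.inr ⟨hz, h0, ⟨by exact_mod_cast h1, by exact_mod_cast h2⟩, hev⟩
  · rintro z (⟨hz, _⟩ | hz)
    · exact hz
    · rw [Set.mem_iUnion] at hz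
      obtain ⟨l, hl | hl⟩ := hz <;> exact hl.1

/-- the distance pulled back by `z ↦ z ^ n`. -/
noncomputable def ρp : ℂ → ℂ → ℝ := fun z w => dist (z ^ n) (w ^ n)

lemma ρp_self (x : ℂ) : ρp n x x = 0 := dist_self _
lemma ρp_comm (x y : ℂ) : ρp n x y = ρp n y x := dist_comm _ _
lemma ρp_tri (x y z : ℂ) : ρp n x z ≤ ρp n x y + ρp n y z := dist_triangle _ _ _

lemma forward_dir (hn : 1 ≤ n) (M : ℕ) (h : NagProp dist X M) :
    NagProp (ρp n) X M := by
  have hcolX := h.hasColorings (fun x => dist_self x) (fun x y => dist_comm x y)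
    (fun x y z => dist_triangle x y z)
  obtain ⟨c, hc1, hcol⟩ := hcolX.large_const
  set a := Real.cos (((n:ℝ) - 1) * π / (2 * n)) with ha_def
  have ha : 0 < a := cos_pos_of_n n hn
  have hAn : (0:ℝ) < n := by exact_mod_cast hn
  have hpiece : ∀ (V : Set ℂ), V ⊆ X → (∀ z ∈ V, z ≠ 0) →
      (∀ z ∈ V, ∀ w ∈ V, InSec n 0 z → True) → False → True := fun _ _ _ _ h => h.elim
  have hkey : ∀ (l : ℕ) (V : Set ℂ), V ⊆ X → (∀ z ∈ V, z ≠ 0) →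
      (∀ z ∈ V, InSec n l z) →
      (∀ x ∈ V, ∀ y ∈ V, lev x = lev y ∨ lev x + 2 ≤ lev y ∨ lev y + 2 ≤ lev x) →
      HasColorings (ρp n) V M := by
    intro l V hVX hV0 hVsec hVlev
    apply E1 V (ρp n) (n-1) a n c M ha hAn hc1 (ρp_comm n)
    · intro x hx y hy
      exact key_lower n hn x y (sec_arg n (hVsec x hx) (hVsec y hy))
    · intro x hx y hy
      exact key_upper n x y
    · exact hV0
    · exact hVlev
    · intro s hs
      obtain ⟨F, hF⟩ := hcol s hs
      exact ⟨_, hF.restrict hVX⟩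
  have hev : ∀ l : Fin (2*n), HasColorings (ρp n) (Pev n X l) M := by
    intro l
    apply hkey l
    · exact fun z hz => hz.1
    · exact fun z hz => hz.2.1
    · exact fun z hz => hz.2.2.1
    · intro x hx y hy
      exact lev_parity (Or.inl ⟨hx.2.2.2, hy.2.2.2⟩)
  have hod : ∀ l : Fin (2*n), HasColorings (ρp n) (Pod n X l) M := by
    intro l
    apply hkey l
    · exact fun z hz => hz.1
    · exact fun z hz => hz.2.1
    · exact fun z hz => hz.2.2.1
    · intro x hx y hy
      exact lev_parity (Or.inr ⟨hx.2.2.2, hy.2.2.2⟩)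
  have hP0 : HasColorings (ρp n) {z | z ∈ X ∧ z = 0} M := by
    apply hasColorings_of_subsingleton (ρp_self n)
    intro x hx y hy
    rw [hx.2, hy.2]
  have hU : HasColorings (ρp n) (⋃ l : Fin (2*n), (Pev n X l ∪ Pod n X l)) M := by
    apply hasColorings_iUnion (ρp_comm n) (ρp_tri n)
    intro l
    exact (hev l).union (ρp_comm n) (ρp_tri n) (hod l)
  have hX : HasColorings (ρp n) X M := by
    rw [pieces_cover n X hn]
    exact (hP0.union (ρp_comm n) (ρp_tri n) hU)
  exact hX.nagProp

lemma backward_dir (hn : 1 ≤ n) (M : ℕ) (h : NagProp (ρp n) X M) :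
    NagProp dist X M := by
  have hcolX := h.hasColorings (ρp_self n) (ρp_comm n) (ρp_tri n)
  obtain ⟨c, hc1, hcol⟩ := hcolX.large_const
  set a := Real.cos (((n:ℝ) - 1) * π / (2 * n)) with ha_def
  have ha : 0 < a := cos_pos_of_n n hn
  have hAn : (0:ℝ) < n := by exact_mod_cast hn
  have hkey : ∀ (l : ℕ) (V : Set ℂ), V ⊆ X → (∀ z ∈ V, z ≠ 0) →
      (∀ z ∈ V, InSec n l z) →
      (∀ x ∈ V, ∀ y ∈ V, lev x = lev y ∨ lev x + 2 ≤ lev y ∨ lev y + 2 ≤ lev x) →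
      HasColorings dist V M := by
    intro l V hVX hV0 hVsec hVlev
    apply E2 V (ρp n) (n-1) a n c M ha hAn hc1
    · intro x hx y hy
      exact key_lower n hn x y (sec_arg n (hVsec x hx) (hVsec y hy))
    · intro x hx y hy
      exact key_upper n x y
    · exact hV0
    · exact hVlev
    · intro s hs
      obtain ⟨F, hF⟩ := hcol s hs
      exact ⟨_, hF.restrict hVX⟩
  have hev : ∀ l : Fin (2*n), HasColorings dist (Pev n X l) M := by
    intro l
    apply hkey l
    · exact fun z hz => hz.1
    · exact fun z hz => hz.2.1
    · exact fun z hz => hz.2.2.1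
    · intro x hx y hy
      exact lev_parity (Or.inl ⟨hx.2.2.2, hy.2.2.2⟩)
  have hod : ∀ l : Fin (2*n), HasColorings dist (Pod n X l) M := by
    intro l
    apply hkey l
    · exact fun z hz => hz.1
    · exact fun z hz => hz.2.1
    · exact fun z hz => hz.2.2.1
    · intro x hx y hy
      exact lev_parity (Or.inr ⟨hx.2.2.2, hy.2.2.2⟩)
  have hP0 : HasColorings dist {z | z ∈ X ∧ z = 0} M := by
    apply hasColorings_of_subsingleton (fun x => dist_self x)
    intro x hx y hy
    rw [hx.2, hy.2]
  have hU : HasColorings dist (⋃ l : Fin (2*n), (Pev n X l ∪ Pod n X l)) M := by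
    apply hasColorings_iUnion (fun x y => dist_comm x y) (fun x y z => dist_triangle x y z)
    intro l
    exact (hev l).union (fun x y => dist_comm x y) (fun x y z => dist_triangle x y z) (hod l)
  have hX : HasColorings dist X M := by
    rw [pieces_cover n X hn]
    exact (hP0.union (fun x y => dist_comm x y) (fun x y z => dist_triangle x y z) hU)
  exact hX.nagProp

end Assembly

end NagPf

/-- **Statement 13.** For `n ≥ 1`, the power map `g z = z ^ n` preserves the Nagata
dimension of every subset of `ℂ`. -/
theorem pow_preserves_nagataDim (n : ℕ) (hn : 1 ≤ n) (X : Set ℂ) :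
    nagataDim X = nagataDim ((fun z : ℂ => z ^ n) '' X) := by
  rw [nagataDim, nagataDim]
  have h1 : nagataDimWith dist X = nagataDimWith (NagPf.ρp n) X := by
    apply le_antisymm
    · exact NagPf.dim_le_dim_of_imp (fun M h => NagPf.backward_dir n X hn M h)
    · exact NagPf.dim_le_dim_of_imp (fun M h => NagPf.forward_dir n X hn M h)
  have h2 : nagataDimWith (NagPf.ρp n) X =
      nagataDimWith dist ((fun z : ℂ => z ^ n) '' X) := by
    apply le_antisymm
    · exact NagPf.dim_le_dim_of_imp
        (fun M h => (NagPf.nagProp_image_iff (fun z : ℂ => z ^ n) dist X M).mpr h)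
    · exact NagPf.dim_le_dim_of_imp
        (fun M h => (NagPf.nagProp_image_iff (fun z : ℂ => z ^ n) dist X M).mp h)
  rw [h1, h2]
end

section
/- Fix p > 0 and 0 < ε < π/2, and let Ω_p = { t^{−p} · e^{iπt} · e^{iθ} : t > 1, |θ| < ε } ⊆ ℂ. Let E be a continuum (a nonempty compact connected set) contained in the closure of Ω_p with −1 ∈ E and 0 ∈ E. Then E is not a porous subset of ℂ. -/
open Set Metric

/-- A set `E ⊆ ℂ` is porous in `ℂ`. -/
def IsPorous (E : Set ℂ) : Prop :=
  ∃ c > (0 : ℝ), ∀ x : ℂ, ∀ r > (0 : ℝ),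
    ∃ z ∈ Metric.ball x r, Metric.ball z (c * r) ∩ E = ∅

noncomputable def thetaFn (p s : ℝ) : ℝ := Real.pi * s ^ (-(1/p))

noncomputable def rotFn (p : ℝ) (w : ℂ) : ℂ :=
  w * Complex.exp (-(Complex.I * (thetaFn p (‖w‖))))

noncomputable def liftArg (p : ℝ) (w : ℂ) : ℝ :=
  thetaFn p (‖w‖) + Complex.arg (rotFn p w)

def Band (p ε : ℝ) : Set ℂ :=
  {w | w ≠ 0 ∧ ‖w‖ * Real.cos ε ≤ (rotFn p w).re}

def Gset (p : ℝ) : Set ℂ := {w | w ≠ 0 ∧ rotFn p w ∈ Complex.slitPlane}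

lemma abs_rotFn (p : ℝ) (w : ℂ) : ‖rotFn p w‖ = ‖w‖ := by
  unfold rotFn
  rw [norm_mul, Complex.norm_exp]
  simp

lemma continuousAt_rotFn (p : ℝ) {w : ℂ} (hw : w ≠ 0) : ContinuousAt (rotFn p) w := by
  have habs : ContinuousAt (fun w : ℂ => ‖w‖) w := continuous_norm.continuousAt
  have h1 : ContinuousAt (fun s : ℝ => s ^ (-(1/p))) (‖w‖) :=
    Real.continuousAt_rpow_const _ _ (Or.inl (by simpa using hw))
  have h2 : ContinuousAt (fun w : ℂ => thetaFn p (‖w‖)) w := by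
    exact ContinuousAt.mul continuousAt_const (h1.comp habs)
  have h3 : ContinuousAt (fun w : ℂ => Complex.exp (-(Complex.I * (thetaFn p (‖w‖))))) w := by
    exact Complex.continuous_exp.continuousAt.comp
      ((continuousAt_const.mul ((Complex.continuous_ofReal.continuousAt.comp h2))).neg)
  exact continuousAt_id.mul h3

lemma continuousAt_liftArg (p : ℝ) {w : ℂ} (hw : w ∈ Gset p) :
    ContinuousAt (liftArg p) w := by
  obtain ⟨hw0, hslit⟩ := hw
  have habs : ContinuousAt (fun w : ℂ => ‖w‖) w := continuous_norm.continuousAt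
  have h1 : ContinuousAt (fun s : ℝ => s ^ (-(1/p))) (‖w‖) :=
    Real.continuousAt_rpow_const _ _ (Or.inl (by simpa using hw0))
  have h2 : ContinuousAt (fun w : ℂ => thetaFn p (‖w‖)) w :=
    ContinuousAt.mul continuousAt_const (h1.comp habs)
  have h3 : ContinuousAt (fun w : ℂ => Complex.arg (rotFn p w)) w :=
    (Complex.continuousAt_arg hslit).comp (continuousAt_rotFn p hw0)
  exact h2.add h3

lemma isOpen_Gset (p : ℝ) : IsOpen (Gset p) := by
  rw [isOpen_iff_mem_nhds]
  rintro w ⟨hw0, hslit⟩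
  have h1 : {w : ℂ | w ≠ 0} ∈ nhds w := isOpen_compl_singleton.mem_nhds hw0
  have h2 : (rotFn p) ⁻¹' Complex.slitPlane ∈ nhds w :=
    (continuousAt_rotFn p hw0) (Complex.isOpen_slitPlane.mem_nhds hslit)
  filter_upwards [h1, h2] with x hx1 hx2
  exact ⟨hx1, hx2⟩

lemma Band_subset_Gset {p ε : ℝ} (hε0 : 0 < ε) (hε : ε < Real.pi / 2) :
    Band p ε ⊆ Gset p := by
  rintro w ⟨hw0, hre⟩
  refine ⟨hw0, Or.inl ?_⟩
  have hcos : 0 < Real.cos ε := Real.cos_pos_of_mem_Ioo ⟨by linarith [Real.pi_pos], hε⟩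
  have : 0 < ‖w‖ := by simpa using hw0
  calc (0:ℝ) < ‖w‖ * Real.cos ε := by positivity
    _ ≤ (rotFn p w).re := hre

lemma abs_arg_rotFn_le {p ε : ℝ} (hε0 : 0 < ε) (hε : ε < Real.pi / 2) {w : ℂ}
    (hw : w ∈ Band p ε) : |Complex.arg (rotFn p w)| ≤ ε := by
  obtain ⟨hw0, hre⟩ := hw
  have hv0 : rotFn p w ≠ 0 := by
    rw [← norm_ne_zero_iff, abs_rotFn]
    simpa using hw0
  have habs : ‖rotFn p w‖ = ‖w‖ := abs_rotFn p w
  have hwpos : 0 < ‖w‖ := by simpa using hw0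
  by_contra hgt
  push_neg at hgt
  have harg := Complex.abs_arg_le_pi (rotFn p w)
  have hcoslt : Real.cos |Complex.arg (rotFn p w)| < Real.cos ε := by
    apply Real.strictAntiOn_cos ⟨by linarith, by linarith [Real.pi_pos]⟩
      ⟨by positivity, harg⟩ hgt
  rw [Real.cos_abs] at hcoslt
  have hcosarg : Real.cos (Complex.arg (rotFn p w)) = (rotFn p w).re / ‖w‖ := by
    rw [← habs]; exact Complex.cos_arg hv0
  rw [hcosarg, div_lt_iff₀ hwpos] at hcoslt
  nlinarith

lemma band_repr {p ε : ℝ} {w : ℂ} (hw : w ∈ Band p ε) :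
    w = (‖w‖ : ℂ) * Complex.exp ((liftArg p w : ℝ) * Complex.I) := by
  obtain ⟨hw0, -⟩ := hw
  have h1 : (‖rotFn p w‖ : ℂ) * Complex.exp ((Complex.arg (rotFn p w)) * Complex.I)
      = rotFn p w := Complex.norm_mul_exp_arg_mul_I _
  rw [abs_rotFn] at h1
  have h2 : w = rotFn p w * Complex.exp (Complex.I * (thetaFn p (‖w‖))) := by
    unfold rotFn
    rw [mul_assoc, ← Complex.exp_add]
    simp
  set A := Complex.arg (rotFn p w) with hA
  set T := thetaFn p (‖w‖) with hT
  have key : (↑(‖w‖) : ℂ) * Complex.exp (↑(T + A) * Complex.I)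
      = rotFn p w * Complex.exp (Complex.I * ↑T) := by
    rw [← h1]
    push_cast
    rw [mul_assoc, ← Complex.exp_add]
    ring_nf
  unfold liftArg
  rw [← hT, ← hA, key, ← h2]

lemma omega_subset_band {p ε : ℝ} (hp : 0 < p) (hε0 : 0 < ε) (hε : ε < Real.pi / 2) :
    {z : ℂ | ∃ t θ : ℝ, 1 < t ∧ |θ| < ε ∧
      z = ((t ^ (-p) : ℝ) : ℂ) * Complex.exp (Complex.I * Real.pi * t) *
        Complex.exp (Complex.I * θ)} ⊆ Band p ε := by
  rintro z ⟨t, θ, ht, hθ, rfl⟩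
  have ht0 : (0:ℝ) < t := by linarith
  have htp : (0:ℝ) < t ^ (-p) := Real.rpow_pos_of_pos ht0 _
  have habs : ‖((t ^ (-p) : ℝ) : ℂ) * Complex.exp (Complex.I * Real.pi * t) *
      Complex.exp (Complex.I * θ)‖ = t ^ (-p) := by
    rw [norm_mul, norm_mul, Complex.norm_exp, Complex.norm_exp]
    simp [abs_of_pos htp]
  have htheta : thetaFn p (t ^ (-p)) = Real.pi * t := by
    unfold thetaFn
    rw [← Real.rpow_mul (le_of_lt ht0)]
    congr 1
    rw [show (-p) * (-(1/p)) = p * (1/p) by ring, mul_one_div_cancel (ne_of_gt hp),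
      Real.rpow_one]
  have hrot : rotFn p (((t ^ (-p) : ℝ) : ℂ) * Complex.exp (Complex.I * Real.pi * t) *
      Complex.exp (Complex.I * θ)) = ((t ^ (-p) : ℝ) : ℂ) * Complex.exp (Complex.I * θ) := by
    unfold rotFn
    rw [habs, htheta]
    rw [mul_assoc, mul_assoc, ← Complex.exp_add, ← Complex.exp_add]
    push_cast
    ring_nf
  constructor
  · rw [← norm_ne_zero_iff, habs]
    exact ne_of_gt htp
  · rw [habs, hrot]
    have hre : (((t ^ (-p) : ℝ) : ℂ) * Complex.exp (Complex.I * θ)).re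
        = t ^ (-p) * Real.cos θ := by
      rw [show Complex.I * (θ:ℂ) = (θ:ℂ) * Complex.I by ring]
      rw [Complex.mul_re]
      simp [Complex.exp_ofReal_mul_I_re, Complex.exp_ofReal_mul_I_im]
    rw [hre]
    have : Real.cos ε ≤ Real.cos θ := by
      rw [← Real.cos_abs θ]
      apply Real.cos_le_cos_of_nonneg_of_le_pi (abs_nonneg θ) (by linarith [Real.pi_pos])
      exact le_of_lt hθ
    nlinarith

lemma isClosed_band_union (p ε : ℝ) : IsClosed (Band p ε ∪ {0}) := by
  rw [← isOpen_compl_iff]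
  have hco : (Band p ε ∪ {0} : Set ℂ)ᶜ
      = {w : ℂ | w ≠ 0 ∧ (rotFn p w).re < ‖w‖ * Real.cos ε} := by
    ext w
    simp only [Band, mem_compl_iff, mem_union, mem_setOf_eq, mem_singleton_iff, not_or,
      not_and_or, not_le, not_ne_iff]
    constructor
    · rintro ⟨h1, h2⟩
      rcases h1 with h1 | h1
      · exact absurd h1 h2
      · exact ⟨h2, h1⟩
    · rintro ⟨h1, h2⟩
      exact ⟨Or.inr h2, h1⟩
  rw [hco, isOpen_iff_mem_nhds]
  rintro w ⟨hw0, hlt⟩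
  have h1 : {w : ℂ | w ≠ 0} ∈ nhds w := isOpen_compl_singleton.mem_nhds hw0
  have hcont : ContinuousAt (fun w : ℂ => ‖w‖ * Real.cos ε - (rotFn p w).re) w := by
    exact ((continuous_norm.continuousAt.mul continuousAt_const)).sub
      (Complex.continuous_re.continuousAt.comp (continuousAt_rotFn p hw0))
  have h2 : {x : ℂ | (0:ℝ) < ‖x‖ * Real.cos ε - (rotFn p x).re} ∈ nhds w := by
    have := hcont.preimage_mem_nhds (Ioi_mem_nhds (by linarith : (0:ℝ) < ‖w‖ * Real.cos ε - (rotFn p w).re))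
    exact this
  filter_upwards [h1, h2] with x hx1 hx2
  exact ⟨hx1, by linarith [sub_pos.mp hx2]⟩

lemma theta_gap {p c : ℝ} (hp : 0 < p) (hc : 0 < c) {s1 s2 M : ℝ} (hs1 : 0 < s1)
    (hM : 0 < M) (h12 : (1 + c/2) * s1 < s2) (h2M : s2 ≤ M ^ (-p)) :
    Real.pi * ((1 + c/2) ^ (1/p) - 1) * M ≤ thetaFn p s1 - thetaFn p s2 := by
  have hpi := Real.pi_pos
  have hb : (0:ℝ) < 1 + c/2 := by linarith
  have hs2 : 0 < s2 := lt_trans (by positivity) h12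
  have hepos : -(1/p) ≤ 0 := by
    have : (0:ℝ) ≤ 1/p := by positivity
    linarith
  have h2 : s2 ^ (-(1/p)) ≤ ((1 + c/2) * s1) ^ (-(1/p)) :=
    Real.rpow_le_rpow_of_nonpos (by positivity) h12.le hepos
  have h3 : ((1 + c/2) * s1) ^ (-(1/p)) = (1 + c/2) ^ (-(1/p)) * s1 ^ (-(1/p)) :=
    Real.mul_rpow hb.le hs1.le
  have h4 : (1 + c/2) ^ (1/p) * (1 + c/2) ^ (-(1/p)) = 1 := by
    rw [← Real.rpow_add hb]
    simp
  have h5 : (1 + c/2) ^ (1/p) * s2 ^ (-(1/p)) ≤ s1 ^ (-(1/p)) := by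
    calc (1 + c/2) ^ (1/p) * s2 ^ (-(1/p))
        ≤ (1 + c/2) ^ (1/p) * (((1 + c/2) * s1) ^ (-(1/p))) := by
          apply mul_le_mul_of_nonneg_left h2 (Real.rpow_nonneg hb.le _)
      _ = ((1 + c/2) ^ (1/p) * (1 + c/2) ^ (-(1/p))) * s1 ^ (-(1/p)) := by rw [h3]; ring
      _ = s1 ^ (-(1/p)) := by rw [h4, one_mul]
  have h6 : M ≤ s2 ^ (-(1/p)) := by
    have := Real.rpow_le_rpow_of_nonpos hs2 h2M hepos
    calc M = (M ^ (-p)) ^ (-(1/p)) := by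
          rw [← Real.rpow_mul hM.le]
          rw [show (-p) * (-(1/p)) = p * (1/p) by ring, mul_one_div_cancel (ne_of_gt hp),
            Real.rpow_one]
      _ ≤ s2 ^ (-(1/p)) := this
  have h7 : 0 < s2 ^ (-(1/p)) := Real.rpow_pos_of_pos hs2 _
  have h8 : (1:ℝ) ≤ (1 + c/2) ^ (1/p) := by
    have : (1:ℝ) < (1 + c/2) ^ (1/p) := (Real.one_lt_rpow_iff_of_pos hb).mpr (Or.inl ⟨by linarith, by positivity⟩)
    linarith
  unfold thetaFn
  nlinarith [mul_le_mul_of_nonneg_left h6 (le_of_lt hpi), h5]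

set_option maxHeartbeats 1000000 in
/-- **Statement 19.** Any continuum contained in the closure of the spiral domain
`Ω_p = {t^{-p} e^{iπt} e^{iθ} : t > 1, |θ| < ε}` and containing `-1` and `0` is not a
porous subset of `ℂ`. -/
theorem spiral_continuum_not_porous (p ε : ℝ) (hp : 0 < p)
    (hε0 : 0 < ε) (hε : ε < Real.pi / 2)
    (E : Set ℂ) (hEcpt : IsCompact E) (hEconn : IsConnected E)
    (hEsub : E ⊆ closure {z : ℂ | ∃ t θ : ℝ, 1 < t ∧ |θ| < ε ∧
      z = ((t ^ (-p) : ℝ) : ℂ) * Complex.exp (Complex.I * Real.pi * t) *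
        Complex.exp (Complex.I * θ)})
    (hm1 : (-1 : ℂ) ∈ E) (h0 : (0 : ℂ) ∈ E) :
    ¬ IsPorous E := by
  rintro ⟨c, hc, hpor⟩
  have hpi := Real.pi_pos
  have hband : E ⊆ Band p ε ∪ {0} := by
    refine hEsub.trans ?_
    rw [← (isClosed_band_union p ε).closure_eq]
    exact closure_mono (fun z hz => Or.inl (omega_subset_band hp hε0 hε hz))
  have hη0 : (0:ℝ) < (1 + c/2) ^ (1/p) - 1 := by
    have h1 : (1:ℝ) < (1 + c/2) ^ (1/p) :=
      (Real.one_lt_rpow_iff_of_pos (by linarith)).mpr (Or.inl ⟨by linarith, by positivity⟩)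
    linarith
  set η : ℝ := (1 + c/2) ^ (1/p) - 1 with hηdef
  set M : ℝ := (2*Real.pi + 2*ε + 2)/(Real.pi * η) with hMdef
  have hM : 0 < M := div_pos (by linarith) (by positivity)
  have hMp : 0 < M ^ (-p) := Real.rpow_pos_of_pos hM _
  set r : ℝ := min (1/4 : ℝ) (M ^ (-p) / 2) with hrdef
  have hr : 0 < r := lt_min (by norm_num) (by linarith)
  obtain ⟨z, hzball, hhole⟩ := hpor 0 r hr
  have hz : ‖z‖ < r := by
    rw [mem_ball, Complex.dist_eq, sub_zero] at hzball
    exact hzball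
  by_cases hsmall : ‖z‖ < c * r / 2
  · apply absurd hhole
    rw [← ne_eq, ← nonempty_iff_ne_empty]
    refine ⟨0, ?_, h0⟩
    rw [mem_ball, Complex.dist_eq, zero_sub, norm_neg]
    nlinarith
  push_neg at hsmall
  have hcr : 0 < c * r := by positivity
  have habs0 : 0 < ‖z‖ := lt_of_lt_of_le (by linarith) hsmall
  have hc2 : c < 2 := by nlinarith
  set s1 : ℝ := ‖z‖ - c*r/4 with hs1def
  set s2 : ℝ := ‖z‖ + c*r/4 with hs2def
  have hs1 : 0 < s1 := by
    have : c*r/4 < c*r/2 := by linarith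
    simp only [hs1def]; linarith
  have hs12 : s1 < s2 := by simp only [hs1def, hs2def]; linarith
  have hs2r : s2 < 2*r := by simp only [hs2def]; nlinarith
  have hs2le1 : s2 < 1 := by
    have h4 : r ≤ 1/4 := min_le_left _ _
    linarith
  have hgap : Real.pi * η * M ≤ thetaFn p s1 - thetaFn p s2 := by
    apply theta_gap hp hc hs1 hM
    · simp only [hs1def, hs2def]; nlinarith
    · have : r ≤ M ^ (-p) / 2 := min_le_right _ _
      linarith
  have hgapval : Real.pi * η * M = 2*Real.pi + 2*ε + 2 := by
    rw [hMdef]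
    field_simp
  set k : ℤ := ⌊(thetaFn p s2 + ε - Complex.arg z)/(2*Real.pi)⌋ + 1 with hkdef
  set a : ℝ := Complex.arg z + 2*Real.pi*k with hadef
  have ha1 : thetaFn p s2 + ε < a := by
    have hfl := Int.lt_floor_add_one ((thetaFn p s2 + ε - Complex.arg z)/(2*Real.pi))
    rw [hadef, hkdef]
    push_cast
    rw [div_lt_iff₀ (by linarith : (0:ℝ) < 2*Real.pi)] at hfl
    linarith
  have ha2 : a < thetaFn p s1 - ε := by
    have hfl := Int.floor_le ((thetaFn p s2 + ε - Complex.arg z)/(2*Real.pi))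
    rw [le_div_iff₀ (by linarith : (0:ℝ) < 2*Real.pi)] at hfl
    have hk2 : 2*Real.pi*k ≤ thetaFn p s2 + ε - Complex.arg z + 2*Real.pi := by
      rw [hkdef]; push_cast; linarith
    rw [hadef]
    linarith
  -- every nonzero point of E is in the band
  have hEband : ∀ w ∈ E, w ≠ 0 → w ∈ Band p ε := by
    intro w hw hw0
    rcases hband hw with h | h
    · exact h
    · exact absurd h hw0
  -- band points have liftArg close to theta
  have hclose : ∀ w ∈ Band p ε, |liftArg p w - thetaFn p (‖w‖)| ≤ ε := by
    intro w hw
    have := abs_arg_rotFn_le hε0 hε hw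
    unfold liftArg
    rw [add_sub_cancel_left]
    exact this
  -- key existence
  have key : ∃ w ∈ E, s1 ≤ ‖w‖ ∧ ‖w‖ ≤ s2 ∧ w ∈ Band p ε ∧
      liftArg p w = a := by
    by_contra hK
    push_neg at hK
    set U : Set ℂ := {w : ℂ | ‖w‖ < s1} ∪
      {w : ℂ | w ∈ Gset p ∧ ‖w‖ < s2 ∧ a < liftArg p w} with hUdef
    set V : Set ℂ := {w : ℂ | s2 < ‖w‖} ∪
      {w : ℂ | w ∈ Gset p ∧ s1 < ‖w‖ ∧ liftArg p w < a} with hVdef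
    have hUo : IsOpen U := by
      apply IsOpen.union
      · exact isOpen_Iio.preimage continuous_norm
      · rw [isOpen_iff_mem_nhds]
        rintro w ⟨hwG, hw2, hwa⟩
        have h1 : Gset p ∈ nhds w := (isOpen_Gset p).mem_nhds hwG
        have h2 : (fun w => ‖w‖) ⁻¹' (Iio s2) ∈ nhds w :=
          continuous_norm.continuousAt.preimage_mem_nhds (Iio_mem_nhds hw2)
        have h3 : liftArg p ⁻¹' (Ioi a) ∈ nhds w :=
          (continuousAt_liftArg p hwG).preimage_mem_nhds (Ioi_mem_nhds hwa)
        filter_upwards [h1, h2, h3] with x hx1 hx2 hx3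
        exact ⟨hx1, hx2, hx3⟩
    have hVo : IsOpen V := by
      apply IsOpen.union
      · exact isOpen_Ioi.preimage continuous_norm
      · rw [isOpen_iff_mem_nhds]
        rintro w ⟨hwG, hw2, hwa⟩
        have h1 : Gset p ∈ nhds w := (isOpen_Gset p).mem_nhds hwG
        have h2 : (fun w => ‖w‖) ⁻¹' (Ioi s1) ∈ nhds w :=
          continuous_norm.continuousAt.preimage_mem_nhds (Ioi_mem_nhds hw2)
        have h3 : liftArg p ⁻¹' (Iio a) ∈ nhds w :=
          (continuousAt_liftArg p hwG).preimage_mem_nhds (Iio_mem_nhds hwa)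
        filter_upwards [h1, h2, h3] with x hx1 hx2 hx3
        exact ⟨hx1, hx2, hx3⟩
    have hcover : E ⊆ U ∪ V := by
      intro w hw
      rcases lt_or_ge (‖w‖) s1 with h | hge1
      · exact Or.inl (Or.inl h)
      rcases lt_or_ge s2 (‖w‖) with h | hle2
      · exact Or.inr (Or.inl h)
      have hw0 : w ≠ 0 := by
        rw [← norm_ne_zero_iff]
        exact ne_of_gt (lt_of_lt_of_le hs1 hge1)
      have hwB : w ∈ Band p ε := hEband w hw hw0
      have hwG : w ∈ Gset p := Band_subset_Gset hε0 hε hwB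
      have hne : liftArg p w ≠ a := hK w hw hge1 hle2 hwB
      rcases lt_or_gt_of_ne hne with h | h
      · -- liftArg < a : show s1 < abs w
        refine Or.inr (Or.inr ⟨hwG, ?_, h⟩)
        rcases eq_or_lt_of_le hge1 with heq | hlt
        · exfalso
          have hcl := hclose w hwB
          rw [← heq] at hcl
          have := abs_le.mp hcl
          linarith [this.1]
        · exact hlt
      · -- a < liftArg : show abs w < s2
        refine Or.inl (Or.inr ⟨hwG, ?_, h⟩)
        rcases eq_or_lt_of_le hle2 with heq | hlt
        · exfalso
          have hcl := hclose w hwB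
          rw [heq] at hcl
          have := abs_le.mp hcl
          linarith [this.2]
        · exact hlt
    have hUne : (E ∩ U).Nonempty := by
      refine ⟨0, h0, Or.inl ?_⟩
      simpa using hs1
    have hVne : (E ∩ V).Nonempty := by
      refine ⟨-1, hm1, Or.inl ?_⟩
      simpa using hs2le1
    obtain ⟨w, hwE, hwU, hwV⟩ := hEconn.isPreconnected U V hUo hVo hcover hUne hVne
    simp only [hUdef, hVdef, Set.mem_union, Set.mem_setOf_eq] at hwU hwV
    rcases hwU with h | ⟨-, h2, h3⟩ <;> rcases hwV with h' | ⟨-, h2', h3'⟩ <;> linarith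
  obtain ⟨w, hwE, hws1, hws2, hwB, hwa⟩ := key
  -- final: w is in the hole
  apply absurd hhole
  rw [← ne_eq, ← nonempty_iff_ne_empty]
  refine ⟨w, ?_, hwE⟩
  have hexp : Complex.exp ((a:ℂ) * Complex.I) = Complex.exp ((Complex.arg z : ℂ) * Complex.I) := by
    have h1 : ((a:ℝ) : ℂ) * Complex.I
        = (Complex.arg z : ℂ) * Complex.I + (k:ℂ) * (2 * (Real.pi:ℂ) * Complex.I) := by
      rw [hadef]; push_cast; ring
    rw [h1, Complex.exp_add, Complex.exp_int_mul_two_pi_mul_I, mul_one]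
  have hwz : w - z = ((‖w‖ - ‖z‖ : ℝ) : ℂ) *
      Complex.exp ((Complex.arg z : ℂ) * Complex.I) := by
    conv_lhs => rw [band_repr hwB, hwa, ← Complex.norm_mul_exp_arg_mul_I z]
    rw [hexp]
    push_cast
    ring
  rw [mem_ball, Complex.dist_eq, hwz, norm_mul, Complex.norm_exp, Complex.norm_real, Real.norm_eq_abs]
  have hre : (((Complex.arg z : ℂ)) * Complex.I).re = 0 := by simp
  rw [hre, Real.exp_zero, mul_one]
  rw [abs_sub_lt_iff]
  constructor <;> simp only [hs1def, hs2def] at hws1 hws2 <;> nlinarith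
end
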